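/- arXiv:2411.01496 — 7 statements merged into one kernel-verified Lean document; each statement's English description precedes it below -/
import Mathlib

section
/- Let p, q, ρ be nonnegative integers. Then the Hamming ball B_ρ[p,q] is a LYM poset: for every antichain A of subsets S ⊆ {1,...,p+q} with |S △ {1,...,p}| ≤ ρ (an antichain with respect to inclusion), one has ∑_{S∈A} 1/N_{r(S)} ≤ 1, where r(S) and N_m are the rank and layer sizes of B_ρ[p,q]. -/
open Finset

/-- Membership in the Hamming ball `B_ρ[p,q]`: subsets `S ⊆ {1,…,p+q}` whose symmetric
difference with `{1,…,p}` has size at most `ρ`. -/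
def memHammingBall (p q ρ : ℕ) (S : Finset ℕ) : Prop :=
  S ⊆ Finset.Icc 1 (p + q) ∧ (symmDiff S (Finset.Icc 1 p)).card ≤ ρ

/-- The rank of `S` in the Hamming ball `B_ρ[p,q]`: with `i = |{1,…,p} \ S|` and
`j = |S \ {1,…,p}|`, the rank is `min p ρ - i + j`. -/
def hammingRank (p ρ : ℕ) (S : Finset ℕ) : ℕ :=
  min p ρ - (Finset.Icc 1 p \ S).card + (S \ Finset.Icc 1 p).card

/-- The size of the `m`-th layer of the Hamming ball `B_ρ[p,q]`:
`N_m = ∑ C(p,i) C(q,j)` over pairs `(i,j)` with `0 ≤ i ≤ p`, `0 ≤ j ≤ q`, `i + j ≤ ρ`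
and `min p ρ - i + j = m`. -/
def hammingLayerSize (p q ρ m : ℕ) : ℕ :=
  ∑ ij ∈ (Finset.range (p + 1) ×ˢ Finset.range (q + 1)).filter
      (fun ij => ij.1 + ij.2 ≤ ρ ∧ min p ρ - ij.1 + ij.2 = m),
    p.choose ij.1 * q.choose ij.2

/-!
A ranked poset whose consecutive layers have the normalized matching property
`|B| / N_{m+1} ≤ |shadow of B in layer m| / N_m` is LYM: replacing the top-rank part of an
antichain by its shadow one rank lower gives again an antichain and does not decrease
`∑ 1 / N_{r(S)}`, so induction on the top rank ends in a single layer, where the sum is at most 1.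

Normalized matching follows from a fractional flow on the covering pairs `t ⋖ s` that sends
`1 / N_{m+1}` out of every `s` of rank `m + 1` and brings at most `1 / N_m` into every `t` of rank
`m`. In the Hamming ball, sort each layer into classes by `j = |S \ {1,…,p}|` (then
`i = min p ρ + j - m`). Going down a cover either removes one more element of `{1,…,p}`, keeping
`j`, or drops one of the added elements, lowering `j`; so the classes of two consecutive layers
form a path, and the flow along this path is forced by the cumulative shares `F_m(k)` of the
classes `j < k` in layer `m`. It is nonnegative because `F_{m+1}(k) ≤ F_m(k) ≤ F_{m+1}(k + 1)`,
a Chebyshev-type consequence of the log-concavity of binomial coefficients. Each class flow is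
spread evenly over the covering pairs that carry it.
-/

section NormalizedMatching

variable {α : Type*}

def rankLayer (P : Finset α) (r : α → ℕ) (m : ℕ) : Finset α := {a ∈ P | r a = m}

lemma sum_inv_card_rankLayer_of_rank_eq {P X : Finset α} {r : α → ℕ} {m : ℕ}
    (hX : ∀ a ∈ X, r a = m) :
    ∑ a ∈ X, (1 : ℝ) / #(rankLayer P r (r a)) = #X / #(rankLayer P r m) := by
  rw [sum_congr rfl fun a ha => by rw [hX a ha], sum_const, nsmul_eq_mul, mul_one_div]

lemma sum_inv_card_rankLayer_le_one_of_subset {P A : Finset α} {r : α → ℕ} {m : ℕ}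
    (hA : A ⊆ rankLayer P r m) : ∑ a ∈ A, (1 : ℝ) / #(rankLayer P r (r a)) ≤ 1 := by
  rw [sum_inv_card_rankLayer_of_rank_eq fun a ha => (mem_filter.1 (hA ha)).2]
  exact div_le_one_of_le₀ (mod_cast card_le_card hA) (Nat.cast_nonneg _)

variable [PartialOrder α] [DecidableLE α]

def layerShadow (P : Finset α) (r : α → ℕ) (m : ℕ) (B : Finset α) : Finset α :=
  {a ∈ rankLayer P r m | ∃ b ∈ B, a ≤ b}

def HasNormalizedMatching (P : Finset α) (r : α → ℕ) : Prop :=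
  ∀ m, ∀ B ⊆ rankLayer P r (m + 1),
    (#B : ℝ) / #(rankLayer P r (m + 1)) ≤ #(layerShadow P r m B) / #(rankLayer P r m)

variable {P A : Finset α} {r : α → ℕ} {n : ℕ}

lemma mem_layerShadow {B : Finset α} {a : α} :
    a ∈ layerShadow P r n B ↔ (a ∈ P ∧ r a = n) ∧ ∃ b ∈ B, a ≤ b := by
  simp only [layerShadow, rankLayer, mem_filter]

lemma disjoint_filter_layerShadow (hA : IsAntichain (· ≤ ·) (A : Set α)) :
    Disjoint {a ∈ A | r a ≠ n + 1} (layerShadow P r n {a ∈ A | r a = n + 1}) := by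
  refine disjoint_left.2 fun a ha ha' => ?_
  obtain ⟨-, b, hb, hab⟩ := mem_layerShadow.1 ha'
  exact hA (mem_filter.1 ha).1 (mem_filter.1 hb).1
    (by rintro rfl; exact (mem_filter.1 ha).2 (mem_filter.1 hb).2) hab

lemma isAntichain_filter_union_layerShadow [DecidableEq α] (hr : StrictMonoOn r P)
    (hAP : A ⊆ P) (hA : IsAntichain (· ≤ ·) (A : Set α)) (hrA : ∀ a ∈ A, r a ≤ n + 1) :
    IsAntichain (· ≤ ·)
      (({a ∈ A | r a ≠ n + 1} ∪ layerShadow P r n {a ∈ A | r a = n + 1} : Finset α) : Set α) := by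
  intro a ha b hb hab hle
  rcases mem_union.1 ha with ha | ha
  · rcases mem_union.1 hb with hb | hb
    · exact hA (mem_filter.1 ha).1 (mem_filter.1 hb).1 hab hle
    · obtain ⟨-, c, hc, hbc⟩ := mem_layerShadow.1 hb
      exact hA (mem_filter.1 ha).1 (mem_filter.1 hc).1
        (by rintro rfl; exact (mem_filter.1 ha).2 (mem_filter.1 hc).2) (hle.trans hbc)
  · obtain ⟨⟨haP, har⟩, -⟩ := mem_layerShadow.1 ha
    have hb' : b ∈ P ∧ r b ≤ n := by
      rcases mem_union.1 hb with hb | hb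
      · obtain ⟨hbA, hbr⟩ := mem_filter.1 hb
        exact ⟨hAP hbA, by have := hrA b hbA; omega⟩
      · obtain ⟨⟨hbP, hbr⟩, -⟩ := mem_layerShadow.1 hb
        exact ⟨hbP, hbr.le⟩
    have := hr haP hb'.1 (lt_of_le_of_ne hle hab)
    omega

theorem HasNormalizedMatching.sum_inv_card_rankLayer_le_one [DecidableEq α]
    (hP : HasNormalizedMatching P r) (hr : StrictMonoOn r P) (hAP : A ⊆ P)
    (hA : IsAntichain (· ≤ ·) (A : Set α)) :
    ∑ a ∈ A, (1 : ℝ) / #(rankLayer P r (r a)) ≤ 1 := by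
  suffices key : ∀ n, ∀ A ⊆ P, IsAntichain (· ≤ ·) (A : Set α) → (∀ a ∈ A, r a ≤ n) →
      ∑ a ∈ A, (1 : ℝ) / #(rankLayer P r (r a)) ≤ 1 from
    key _ A hAP hA fun a ha => le_sup (f := r) ha
  intro n
  induction n with
  | zero =>
    intro A hAP _ hrA
    exact sum_inv_card_rankLayer_le_one_of_subset fun a ha =>
      mem_filter.2 ⟨hAP ha, Nat.le_zero.1 (hrA a ha)⟩
  | succ n ih =>
    intro A hAP hA hrA
    set top := {a ∈ A | r a = n + 1}
    set rest := {a ∈ A | r a ≠ n + 1}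
    set shadow := layerShadow P r n top
    have hrest : ∀ a ∈ rest, a ∈ P ∧ r a ≤ n := fun a ha => by
      obtain ⟨haA, har⟩ := mem_filter.1 ha
      exact ⟨hAP haA, by have := hrA a haA; omega⟩
    have hshadow : ∀ a ∈ shadow, a ∈ P ∧ r a = n := fun a ha => (mem_layerShadow.1 ha).1
    calc ∑ a ∈ A, (1 : ℝ) / #(rankLayer P r (r a))
        = #top / #(rankLayer P r (n + 1)) + ∑ a ∈ rest, (1 : ℝ) / #(rankLayer P r (r a)) := by
          rw [← sum_filter_add_sum_filter_not A (fun a => r a = n + 1),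
            sum_inv_card_rankLayer_of_rank_eq fun a ha => (mem_filter.1 ha).2]
      _ ≤ #shadow / #(rankLayer P r n) + ∑ a ∈ rest, (1 : ℝ) / #(rankLayer P r (r a)) :=
          add_le_add_left (hP n top fun a ha =>
            mem_filter.2 ⟨hAP (mem_filter.1 ha).1, (mem_filter.1 ha).2⟩) _
      _ = ∑ a ∈ rest ∪ shadow, (1 : ℝ) / #(rankLayer P r (r a)) := by
          rw [sum_union (disjoint_filter_layerShadow hA),
            sum_inv_card_rankLayer_of_rank_eq fun a ha => (hshadow a ha).2, add_comm]
      _ ≤ 1 := by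
          refine ih _ (union_subset (fun a ha => (hrest a ha).1) fun a ha => (hshadow a ha).1)
            (isAntichain_filter_union_layerShadow hr hAP hA hrA) fun a ha => ?_
          rcases mem_union.1 ha with ha | ha
          · exact (hrest a ha).2
          · exact (hshadow a ha).2.le

end NormalizedMatching

theorem card_mul_le_card_filter_exists_mul_of_flow {α β : Type*} {X : Finset α} {Y : Finset β}
    (R : α → β → Prop) [∀ a b, Decidable (R a b)] (w : α → β → ℝ) {a b : ℝ}
    (hw : ∀ x ∈ X, ∀ y ∈ Y, R x y → 0 ≤ w x y)
    (hY : ∀ y ∈ Y, a ≤ ∑ x ∈ X with R x y, w x y)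
    (hX : ∀ x ∈ X, ∑ y ∈ Y with R x y, w x y ≤ b) {B : Finset β} (hB : B ⊆ Y) :
    #B * a ≤ #{x ∈ X | ∃ y ∈ B, R x y} * b := by
  set S := {x ∈ X | ∃ y ∈ B, R x y}
  calc #B * a = ∑ y ∈ B, a := by rw [sum_const, nsmul_eq_mul]
    _ ≤ ∑ y ∈ B, ∑ x ∈ X with R x y, w x y := sum_le_sum fun y hy => hY y (hB hy)
    _ = ∑ y ∈ B, ∑ x ∈ S with R x y, w x y := by
        refine sum_congr rfl fun y hy => (sum_subset (fun x hx => ?_) fun x hx hxS => ?_).symm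
        · simp only [S, mem_filter] at hx ⊢
          exact ⟨hx.1.1, hx.2⟩
        · simp only [S, mem_filter] at hx hxS
          exact absurd ⟨⟨hx.1, y, hy, hx.2⟩, hx.2⟩ hxS
    _ = ∑ x ∈ S, ∑ y ∈ B with R x y, w x y := sum_comm' fun y x => by
        simp only [mem_filter]; tauto
    _ ≤ ∑ x ∈ S, ∑ y ∈ Y with R x y, w x y := by
        refine sum_le_sum fun x hx => sum_le_sum_of_subset_of_nonneg
          (filter_subset_filter _ hB) fun y hy _ => ?_
        exact hw x (mem_filter.1 hx).1 y (mem_filter.1 hy).1 (mem_filter.1 hy).2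
    _ ≤ ∑ x ∈ S, b := sum_le_sum fun x hx => hX x (mem_filter.1 hx).1
    _ = #S * b := by rw [sum_const, nsmul_eq_mul]

theorem sum_range_mul_sum_range_le {R : Type*} [CommSemiring R] [PartialOrder R]
    [IsOrderedRing R] (u v : ℕ → R) (h : ∀ t s, t ≤ s → v t * u s ≤ u t * v s) {K T : ℕ}
    (hKT : K ≤ T) :
    (∑ t ∈ range K, v t) * ∑ s ∈ range T, u s ≤ (∑ t ∈ range K, u t) * ∑ s ∈ range T, v s := by
  have hcross : (∑ t ∈ range K, v t) * ∑ s ∈ Ico K T, u s ≤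
      (∑ t ∈ range K, u t) * ∑ s ∈ Ico K T, v s := by
    rw [sum_mul_sum, sum_mul_sum]
    exact sum_le_sum fun t ht => sum_le_sum fun s hs =>
      h t s ((mem_range.1 ht).le.trans (mem_Ico.1 hs).1)
  rw [← sum_range_add_sum_Ico u hKT, ← sum_range_add_sum_Ico v hKT, mul_add, mul_add]
  exact add_le_add (mul_comm _ _).le hcross

theorem Nat.choose_mul_choose_succ_le (n : ℕ) {a b : ℕ} (h : a ≤ b) :
    n.choose a * n.choose (b + 1) ≤ n.choose (a + 1) * n.choose b := by
  refine Nat.le_of_mul_le_mul_right (c := (a + 1) * (b + 1)) ?_ (by positivity)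
  have ha := Nat.choose_succ_right_eq n a
  have hb := Nat.choose_succ_right_eq n b
  calc n.choose a * n.choose (b + 1) * ((a + 1) * (b + 1))
      = n.choose a * (n.choose (b + 1) * (b + 1)) * (a + 1) := by ring
    _ = n.choose a * n.choose b * ((n - b) * (a + 1)) := by rw [hb]; ring
    _ ≤ n.choose a * n.choose b * ((n - a) * (b + 1)) := by gcongr
    _ = n.choose (a + 1) * (a + 1) * n.choose b * (b + 1) := by rw [ha]; ring
    _ = n.choose (a + 1) * n.choose b * ((a + 1) * (b + 1)) := by ring

theorem card_filter_powerset_card_sdiff_eq {α : Type*} [DecidableEq α] {s t : Finset α}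
    (hst : s ⊆ t) (i j : ℕ) :
    #{u ∈ t.powerset | #(s \ u) = i ∧ #(u \ s) = j} = (#s).choose i * (#(t \ s)).choose j := by
  rw [← card_powersetCard, ← card_powersetCard, ← card_product]
  have hinv : ∀ v : Finset α × Finset α, v ∈ powersetCard i s ×ˢ powersetCard j (t \ s) →
      s \ (s \ v.1 ∪ v.2) = v.1 ∧ (s \ v.1 ∪ v.2) \ s = v.2 := by
    intro v hv
    simp only [mem_product, mem_powersetCard] at hv
    have hv2 : Disjoint v.2 s := disjoint_of_subset_left hv.2.1 sdiff_disjoint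
    exact ⟨by grind, by grind⟩
  refine card_nbij' (fun u => (s \ u, u \ s)) (fun v => (s \ v.1) ∪ v.2) ?_ ?_ ?_ ?_
  · intro u hu
    simp only [coe_filter, mem_powerset, Set.mem_ofPred_eq, coe_product, mem_coe, Set.mem_prod,
      mem_powersetCard] at hu ⊢
    exact ⟨⟨sdiff_subset, hu.2.1⟩, sdiff_subset_sdiff hu.1 le_rfl, hu.2.2⟩
  · intro v hv
    have := hinv v hv
    simp only [coe_filter, mem_powerset, Set.mem_ofPred_eq, coe_product, mem_coe, Set.mem_prod,
      mem_powersetCard] at hv ⊢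
    refine ⟨union_subset (sdiff_subset.trans hst) (hv.2.1.trans sdiff_subset), ?_, ?_⟩ <;>
      simp [this, hv]
  · intro u _
    grind
  · intro v hv
    exact Prod.ext (hinv v hv).1 (hinv v hv).2

lemma natCast_mul_div_natCast_mul {n : ℕ} {a : ℝ} (c : ℝ) (h : n = 0 → a = 0) :
    n * (a / (n * c)) = a / c := by
  rcases eq_or_ne n 0 with rfl | hn
  · simp [h rfl]
  · rw [mul_div_assoc', mul_div_mul_left _ _ (Nat.cast_ne_zero.2 hn)]

lemma natCast_mul_div_natCast_mul_le (n : ℕ) {a c : ℝ} (ha : 0 ≤ a) (hc : 0 ≤ c) :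
    n * (a / (n * c)) ≤ a / c := by
  rcases eq_or_ne n 0 with rfl | hn
  · simp only [Nat.cast_zero, zero_mul, div_zero, mul_zero]
    positivity
  · rw [natCast_mul_div_natCast_mul c fun h => absurd h hn]

namespace HammingBall

variable {p q ρ m : ℕ} {S s t : Finset ℕ} {x : ℕ}

def numRemoved (p : ℕ) (S : Finset ℕ) : ℕ := #(Icc 1 p \ S)

def numAdded (p : ℕ) (S : Finset ℕ) : ℕ := #(S \ Icc 1 p)

instance (p q ρ : ℕ) : DecidablePred (memHammingBall p q ρ) :=
  fun _ => inferInstanceAs (Decidable (_ ∧ _))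

def ball (p q ρ : ℕ) : Finset (Finset ℕ) := {S ∈ (Icc 1 (p + q)).powerset | memHammingBall p q ρ S}

abbrev layer (p q ρ m : ℕ) : Finset (Finset ℕ) := rankLayer (ball p q ρ) (hammingRank p ρ) m

lemma mem_ball : S ∈ ball p q ρ ↔ S ⊆ Icc 1 (p + q) ∧ numRemoved p S + numAdded p S ≤ ρ := by
  rw [ball, mem_filter, mem_powerset, memHammingBall, symmDiff_def, sup_eq_union,
    card_union_of_disjoint disjoint_sdiff_sdiff, numRemoved, numAdded, add_comm (#(S \ _))]
  exact ⟨fun h => h.2, fun h => ⟨h.1, h⟩⟩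

lemma mem_layer : S ∈ layer p q ρ m ↔ S ∈ ball p q ρ ∧ hammingRank p ρ S = m := mem_filter

lemma numRemoved_le (p : ℕ) (S : Finset ℕ) : numRemoved p S ≤ p := by
  simpa [numRemoved] using card_le_card (sdiff_subset (s := Icc 1 p) (t := S))

lemma numAdded_le (hS : S ⊆ Icc 1 (p + q)) : numAdded p S ≤ q := by
  have : S \ Icc 1 p ⊆ Icc 1 (p + q) \ Icc 1 p := sdiff_subset_sdiff hS le_rfl
  simpa [numAdded, card_sdiff_of_subset (Icc_subset_Icc_right (Nat.le_add_right p q))] using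
    card_le_card this

lemma card_add_numRemoved (p : ℕ) (S : Finset ℕ) : #S + numRemoved p S = p + numAdded p S := by
  have h₁ := card_inter_add_card_sdiff S (Icc 1 p)
  have h₂ := card_sdiff_add_card_inter (Icc 1 p) S
  rw [inter_comm, Nat.card_Icc, Nat.add_sub_cancel] at h₂
  unfold numRemoved numAdded
  omega

lemma card_inter_Icc (p : ℕ) (s : Finset ℕ) : #(s ∩ Icc 1 p) = p - numRemoved p s := by
  have := card_sdiff_add_card_inter (Icc 1 p) s
  rw [Nat.card_Icc, inter_comm] at this
  unfold numRemoved
  omega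

lemma hammingRank_add_numRemoved (hS : S ∈ ball p q ρ) :
    hammingRank p ρ S + numRemoved p S = min p ρ + numAdded p S := by
  have := (mem_ball.1 hS).2
  have := numRemoved_le p S
  unfold hammingRank
  unfold numRemoved numAdded at *
  omega

lemma hammingRank_add (hS : S ∈ ball p q ρ) : hammingRank p ρ S + p = #S + min p ρ := by
  have := hammingRank_add_numRemoved hS
  have := card_add_numRemoved p S
  omega

lemma strictMonoOn_hammingRank : StrictMonoOn (hammingRank p ρ) (ball p q ρ : Set (Finset ℕ)) :=
  fun _ hS _ hT hST => by
    have := hammingRank_add hS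
    have := hammingRank_add hT
    have := card_lt_card hST
    omega

lemma coords_erase_of_mem_Icc (hx : x ∈ s) (hxp : x ∈ Icc 1 p) :
    numRemoved p (s.erase x) = numRemoved p s + 1 ∧ numAdded p (s.erase x) = numAdded p s := by
  unfold numRemoved numAdded
  rw [sdiff_erase hxp, card_insert_of_notMem (fun h => (mem_sdiff.1 h).2 hx), erase_sdiff_comm,
    erase_eq_of_notMem fun h => (mem_sdiff.1 h).2 hxp]
  exact ⟨rfl, rfl⟩

lemma coords_erase_of_notMem_Icc (hx : x ∈ s) (hxp : x ∉ Icc 1 p) :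
    numRemoved p (s.erase x) = numRemoved p s ∧ numAdded p (s.erase x) + 1 = numAdded p s := by
  unfold numRemoved numAdded
  rw [erase_sdiff_comm, card_erase_add_one (mem_sdiff.2 ⟨hx, hxp⟩)]
  exact ⟨by congr 1; grind, rfl⟩

lemma erase_mem_ball_iff (hs : s ∈ ball p q ρ) (hx : x ∈ s) :
    s.erase x ∈ ball p q ρ ↔ (x ∈ Icc 1 p → numRemoved p s + 1 + numAdded p s ≤ ρ) := by
  rw [mem_ball, and_iff_right ((erase_subset x s).trans (mem_ball.1 hs).1)]
  by_cases hxp : x ∈ Icc 1 p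
  · obtain ⟨h₁, h₂⟩ := coords_erase_of_mem_Icc hx hxp
    simp only [h₁, h₂, hxp, forall_const]
  · obtain ⟨h₁, h₂⟩ := coords_erase_of_notMem_Icc hx hxp
    have := (mem_ball.1 hs).2
    simp only [hxp, IsEmpty.forall_iff, iff_true]
    omega

lemma insert_mem_ball_iff (ht : t ∈ ball p q ρ) (hx : x ∈ Icc 1 (p + q) \ t) :
    insert x t ∈ ball p q ρ ↔ (x ∉ Icc 1 p → numRemoved p t + numAdded p t + 1 ≤ ρ) := by
  obtain ⟨hx, hxt⟩ := mem_sdiff.1 hx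
  rw [mem_ball, and_iff_right (insert_subset hx (mem_ball.1 ht).1)]
  have hmem := mem_insert_self x t
  by_cases hxp : x ∈ Icc 1 p
  · obtain ⟨h₁, h₂⟩ := coords_erase_of_mem_Icc hmem hxp
    rw [erase_insert hxt] at h₁ h₂
    have := (mem_ball.1 ht).2
    simp only [hxp, not_true_eq_false, IsEmpty.forall_iff, iff_true]
    omega
  · obtain ⟨h₁, h₂⟩ := coords_erase_of_notMem_Icc hmem hxp
    rw [erase_insert hxt] at h₁ h₂
    simp only [hxp, not_false_eq_true, forall_const]
    omega

lemma erase_mem_layer (hs : s ∈ layer p q ρ (m + 1)) (hx : x ∈ s) (h : s.erase x ∈ ball p q ρ) :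
    s.erase x ∈ layer p q ρ m := by
  rw [mem_layer] at hs ⊢
  have := hammingRank_add hs.1
  have := hammingRank_add h
  have := card_erase_add_one hx
  exact ⟨h, by omega⟩

lemma insert_mem_layer (ht : t ∈ layer p q ρ m) (hxt : x ∉ t) (h : insert x t ∈ ball p q ρ) :
    insert x t ∈ layer p q ρ (m + 1) := by
  rw [mem_layer] at ht ⊢
  have := hammingRank_add ht.1
  have := hammingRank_add h
  have := card_insert_of_notMem hxt
  exact ⟨h, by omega⟩

lemma layer_nonempty_of_mem_succ (hs : s ∈ layer p q ρ (m + 1)) : (layer p q ρ m).Nonempty := by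
  have hball := (mem_layer.1 hs).1
  suffices ∃ x ∈ s, s.erase x ∈ ball p q ρ from
    let ⟨x, hx, h⟩ := this
    ⟨_, erase_mem_layer hs hx h⟩
  by_cases hj : numAdded p s = 0
  · have hrank := hammingRank_add_numRemoved hball
    rw [(mem_layer.1 hs).2] at hrank
    obtain ⟨x, hx⟩ : (s ∩ Icc 1 p).Nonempty := card_pos.1 (by rw [card_inter_Icc]; omega)
    obtain ⟨hxs, -⟩ := mem_inter.1 hx
    exact ⟨x, hxs, (erase_mem_ball_iff hball hxs).2 fun _ => by omega⟩
  · obtain ⟨x, hx⟩ : (s \ Icc 1 p).Nonempty := card_pos.1 (Nat.pos_of_ne_zero hj)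
    obtain ⟨hxs, hxp⟩ := mem_sdiff.1 hx
    exact ⟨x, hxs, (erase_mem_ball_iff hball hxs).2 fun h => absurd h hxp⟩

lemma card_add_one_eq_card (ht : t ∈ layer p q ρ m) (hs : s ∈ layer p q ρ (m + 1)) :
    #t + 1 = #s := by
  have := hammingRank_add (mem_layer.1 ht).1
  have := hammingRank_add (mem_layer.1 hs).1
  have := (mem_layer.1 ht).2
  have := (mem_layer.1 hs).2
  omega

lemma filter_layer_le_eq_image_erase (hs : s ∈ layer p q ρ (m + 1)) :
    {t ∈ layer p q ρ m | t ≤ s} = {x ∈ s | s.erase x ∈ ball p q ρ}.image s.erase := by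
  ext t
  simp only [mem_filter, mem_image]
  constructor
  · rintro ⟨ht, hts⟩
    obtain ⟨x, hxt, rfl⟩ := exists_eq_insert_iff.2 ⟨hts, card_add_one_eq_card ht hs⟩
    refine ⟨x, ⟨mem_insert_self x t, ?_⟩, erase_insert hxt⟩
    rw [erase_insert hxt]
    exact (mem_layer.1 ht).1
  · rintro ⟨x, ⟨hx, hball⟩, rfl⟩
    exact ⟨erase_mem_layer hs hx hball, erase_subset x s⟩

lemma filter_layer_succ_ge_eq_image_insert (ht : t ∈ layer p q ρ m) :
    {s ∈ layer p q ρ (m + 1) | t ≤ s} =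
      {x ∈ Icc 1 (p + q) \ t | insert x t ∈ ball p q ρ}.image (insert · t) := by
  ext s
  simp only [mem_filter, mem_image]
  constructor
  · rintro ⟨hs, hts⟩
    obtain ⟨x, hxt, rfl⟩ := exists_eq_insert_iff.2 ⟨hts, card_add_one_eq_card ht hs⟩
    exact ⟨x, ⟨mem_sdiff.2 ⟨(mem_ball.1 (mem_layer.1 hs).1).1 (mem_insert_self x t), hxt⟩,
      (mem_layer.1 hs).1⟩, rfl⟩
  · rintro ⟨x, ⟨hx, hball⟩, rfl⟩
    exact ⟨insert_mem_layer ht (mem_sdiff.1 hx).2 hball, subset_insert x t⟩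

lemma sum_layer_le_eq_sum_erase (hs : s ∈ layer p q ρ (m + 1)) (f : Finset ℕ → ℝ) :
    ∑ t ∈ layer p q ρ m with t ≤ s, f t =
      ∑ x ∈ s, if s.erase x ∈ ball p q ρ then f (s.erase x) else 0 := by
  rw [filter_layer_le_eq_image_erase hs,
    sum_image ((erase_injOn s).mono fun x hx => (mem_filter.1 hx).1), sum_filter]

lemma sum_layer_succ_ge_eq_sum_insert (ht : t ∈ layer p q ρ m) (f : Finset ℕ → ℝ) :
    ∑ s ∈ layer p q ρ (m + 1) with t ≤ s, f s =
      ∑ x ∈ Icc 1 (p + q) \ t, if insert x t ∈ ball p q ρ then f (insert x t) else 0 := by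
  rw [filter_layer_succ_ge_eq_image_insert ht, sum_image fun x hx y hy => insert_inj_on t
      (mem_sdiff.1 (mem_filter.1 hx).1).2 (mem_sdiff.1 (mem_filter.1 hy).1).2, sum_filter]

lemma card_Icc_sdiff_inter_Icc (p q : ℕ) (t : Finset ℕ) :
    #((Icc 1 (p + q) \ t) ∩ Icc 1 p) = numRemoved p t := by
  have hpq : Icc 1 p ⊆ Icc 1 (p + q) := Icc_subset_Icc_right (Nat.le_add_right p q)
  rw [numRemoved, show (Icc 1 (p + q) \ t) ∩ Icc 1 p = Icc 1 p \ t by grind]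

lemma card_Icc_sdiff_sdiff_Icc (ht : t ⊆ Icc 1 (p + q)) :
    #((Icc 1 (p + q) \ t) \ Icc 1 p) = q - numAdded p t := by
  have hpq : Icc 1 p ⊆ Icc 1 (p + q) := Icc_subset_Icc_right (Nat.le_add_right p q)
  rw [show (Icc 1 (p + q) \ t) \ Icc 1 p = (Icc 1 (p + q) \ Icc 1 p) \ (t \ Icc 1 p) by grind,
    card_sdiff_of_subset (sdiff_subset_sdiff ht le_rfl), card_sdiff_of_subset hpq]
  simp [numAdded]

-- The elements of layer `m` with `j` added elements have `i = min p ρ + j - m` removed ones.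
def classSize (p q ρ m j : ℕ) : ℕ :=
  if m ≤ min p ρ + j ∧ min p ρ + j - m + j ≤ ρ then p.choose (min p ρ + j - m) * q.choose j
  else 0

lemma classSize_of_mem_layer (hS : S ∈ layer p q ρ m) :
    classSize p q ρ m (numAdded p S) = p.choose (numRemoved p S) * q.choose (numAdded p S) := by
  obtain ⟨hball, rfl⟩ := mem_layer.1 hS
  have h₁ := hammingRank_add_numRemoved hball
  have h₂ := (mem_ball.1 hball).2
  rw [classSize, if_pos (by omega),
    show min p ρ + numAdded p S - hammingRank p ρ S = numRemoved p S by omega]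

lemma classSize_pos_of_mem_layer (hS : S ∈ layer p q ρ m) :
    0 < classSize p q ρ m (numAdded p S) := by
  rw [classSize_of_mem_layer hS]
  exact mul_pos (Nat.choose_pos (numRemoved_le p S))
    (Nat.choose_pos (numAdded_le (mem_ball.1 (mem_layer.1 hS).1).1))

lemma classSize_eq_zero {j : ℕ} (h : p < min p ρ + j - m ∨ ρ < min p ρ + j - m + j) :
    classSize p q ρ m j = 0 := by
  unfold classSize
  split_ifs
  · rcases h with h | h
    · rw [Nat.choose_eq_zero_of_lt h, zero_mul]
    · omega
  · rfl

lemma classSize_eq_zero_of_lt {j : ℕ} (hj : q < j) : classSize p q ρ m j = 0 := by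
  unfold classSize
  split_ifs
  · rw [Nat.choose_eq_zero_of_lt hj, mul_zero]
  · rfl

lemma hammingLayerSize_eq_sum_classSize (p q ρ m : ℕ) :
    hammingLayerSize p q ρ m = ∑ j ∈ range (q + 1), classSize p q ρ m j := by
  rw [hammingLayerSize, sum_filter, sum_product_right]
  refine sum_congr rfl fun j _ => ?_
  rw [sum_eq_single (min p ρ + j - m)]
  · unfold classSize
    split_ifs with h₁ h₂ h₂
    · rfl
    · omega
    · rw [Nat.choose_eq_zero_of_lt (by omega), zero_mul]
    · rfl
  · intro i hi hne
    rw [if_neg]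
    have := mem_range.1 hi
    omega
  · intro hi
    rw [Nat.choose_eq_zero_of_lt (by simp at hi; omega), zero_mul, ite_self]

lemma card_layer (p q ρ m : ℕ) : #(layer p q ρ m) = hammingLayerSize p q ρ m := by
  rw [hammingLayerSize, card_eq_sum_card_fiberwise (f := fun S => (numRemoved p S, numAdded p S))]
  · refine sum_congr rfl fun ij hij => ?_
    simp only [mem_filter, mem_product, mem_range] at hij
    have hpq : Icc 1 p ⊆ Icc 1 (p + q) := Icc_subset_Icc_right (Nat.le_add_right p q)
    have hp : #(Icc 1 p) = p := by simp
    have hq : #(Icc 1 (p + q) \ Icc 1 p) = q := by simp [card_sdiff_of_subset hpq]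
    have hcount := card_filter_powerset_card_sdiff_eq hpq ij.1 ij.2
    rw [hp, hq] at hcount
    rw [← hcount]
    congr 1
    ext S
    simp only [mem_filter, mem_layer, mem_ball, mem_powerset, Prod.ext_iff]
    unfold hammingRank numRemoved numAdded
    constructor
    · rintro ⟨⟨⟨hS, -⟩, -⟩, h⟩
      exact ⟨hS, h⟩
    · rintro ⟨hS, h₁, h₂⟩
      exact ⟨⟨⟨hS, by omega⟩, by omega⟩, h₁, h₂⟩
  · intro S hS
    obtain ⟨hball, hrank⟩ := mem_layer.1 hS
    have := numRemoved_le p S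
    have := numAdded_le (mem_ball.1 hball).1
    have := (mem_ball.1 hball).2
    simp only [coe_filter, mem_product, mem_range, Set.mem_ofPred_eq]
    exact ⟨⟨by omega, by omega⟩, this, hrank⟩

lemma classSize_succ_mul_classSize_le {j k : ℕ} (hjk : j ≤ k) :
    classSize p q ρ (m + 1) j * classSize p q ρ m k ≤
      classSize p q ρ m j * classSize p q ρ (m + 1) k := by
  unfold classSize
  by_cases h₁ : m + 1 ≤ min p ρ + j ∧ min p ρ + j - (m + 1) + j ≤ ρ
  · by_cases h₂ : m ≤ min p ρ + k ∧ min p ρ + k - m + k ≤ ρ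
    · rw [if_pos h₁, if_pos h₂, if_pos (by omega), if_pos (by omega),
        show min p ρ + j - m = min p ρ + j - (m + 1) + 1 by omega,
        show min p ρ + k - m = min p ρ + k - (m + 1) + 1 by omega]
      have := Nat.choose_mul_choose_succ_le p
        (show min p ρ + j - (m + 1) ≤ min p ρ + k - (m + 1) by omega)
      calc _ = p.choose (min p ρ + j - (m + 1)) * p.choose (min p ρ + k - (m + 1) + 1) *
              (q.choose j * q.choose k) := by ring
        _ ≤ p.choose (min p ρ + j - (m + 1) + 1) * p.choose (min p ρ + k - (m + 1)) *
              (q.choose j * q.choose k) := by gcongr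
        _ = _ := by ring
    · rw [if_neg h₂, mul_zero]
      exact Nat.zero_le _
  · rw [if_neg h₁, zero_mul]
    exact Nat.zero_le _

lemma classSize_mul_classSize_succ_le {j k : ℕ} (hjk : j ≤ k) :
    classSize p q ρ m j * classSize p q ρ (m + 1) (k + 1) ≤
      classSize p q ρ (m + 1) (j + 1) * classSize p q ρ m k := by
  unfold classSize
  by_cases h₁ : m ≤ min p ρ + j ∧ min p ρ + j - m + j ≤ ρ
  · by_cases h₂ : m + 1 ≤ min p ρ + (k + 1) ∧ min p ρ + (k + 1) - (m + 1) + (k + 1) ≤ ρ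
    · rw [if_pos h₁, if_pos h₂, if_pos (by omega), if_pos (by omega),
        show min p ρ + (j + 1) - (m + 1) = min p ρ + j - m by omega,
        show min p ρ + (k + 1) - (m + 1) = min p ρ + k - m by omega]
      have := Nat.choose_mul_choose_succ_le q hjk
      calc _ = p.choose (min p ρ + j - m) * p.choose (min p ρ + k - m) *
              (q.choose j * q.choose (k + 1)) := by ring
        _ ≤ p.choose (min p ρ + j - m) * p.choose (min p ρ + k - m) *
              (q.choose (j + 1) * q.choose k) := by gcongr
        _ = _ := by ring
    · rw [if_neg h₂, mul_zero]
      exact Nat.zero_le _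
  · rw [if_neg h₁, zero_mul]
    exact Nat.zero_le _

def classSizeSum (p q ρ m k : ℕ) : ℕ := ∑ j ∈ range k, classSize p q ρ m j

lemma classSizeSum_eq_hammingLayerSize {k : ℕ} (h : ∀ j, k ≤ j → classSize p q ρ m j = 0) :
    classSizeSum p q ρ m k = hammingLayerSize p q ρ m := by
  rw [hammingLayerSize_eq_sum_classSize, classSizeSum]
  rcases le_total k (q + 1) with hk | hk
  · rw [← sum_range_add_sum_Ico _ hk, sum_eq_zero fun j hj => h j (mem_Ico.1 hj).1, add_zero]
  · rw [← sum_range_add_sum_Ico _ hk, add_eq_left]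
    exact sum_eq_zero fun j hj => classSize_eq_zero_of_lt (by have := (mem_Ico.1 hj).1; omega)

lemma classSizeSum_le_hammingLayerSize {k : ℕ} (hk : k ≤ q + 1) :
    classSizeSum p q ρ m k ≤ hammingLayerSize p q ρ m := by
  rw [hammingLayerSize_eq_sum_classSize]
  exact sum_le_sum_of_subset (range_subset_range.2 hk)

lemma classSizeSum_succ_mul_le {k : ℕ} (hk : k ≤ q + 1) :
    classSizeSum p q ρ (m + 1) k * hammingLayerSize p q ρ m ≤
      classSizeSum p q ρ m k * hammingLayerSize p q ρ (m + 1) := by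
  rw [hammingLayerSize_eq_sum_classSize, hammingLayerSize_eq_sum_classSize]
  exact sum_range_mul_sum_range_le _ _ (fun _ _ => classSize_succ_mul_classSize_le) hk

lemma classSizeSum_mul_le {k : ℕ} (hk : k ≤ q + 1) :
    classSizeSum p q ρ m k * hammingLayerSize p q ρ (m + 1) ≤
      classSizeSum p q ρ (m + 1) (k + 1) * hammingLayerSize p q ρ m := by
  have hcross := sum_range_mul_sum_range_le (fun j => classSize p q ρ (m + 1) (j + 1))
    (classSize p q ρ m) (fun _ _ => classSize_mul_classSize_succ_le) hk
  have hN' : hammingLayerSize p q ρ (m + 1) =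
      ∑ j ∈ range (q + 1), classSize p q ρ (m + 1) (j + 1) + classSize p q ρ (m + 1) 0 := by
    rw [← sum_range_succ', ← classSizeSum]
    exact (classSizeSum_eq_hammingLayerSize fun j hj => classSize_eq_zero_of_lt (by omega)).symm
  have hG : classSizeSum p q ρ (m + 1) (k + 1) =
      ∑ j ∈ range k, classSize p q ρ (m + 1) (j + 1) + classSize p q ρ (m + 1) 0 :=
    sum_range_succ' _ _
  have hle := classSizeSum_le_hammingLayerSize (p := p) (ρ := ρ) (m := m) hk
  rw [hammingLayerSize_eq_sum_classSize p q ρ m, classSizeSum] at hle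
  rw [hN', hG, hammingLayerSize_eq_sum_classSize p q ρ m, classSizeSum]
  nlinarith

-- The share `F_m(k)` of layer `m` taken by the classes `j < k`.
noncomputable def share (p q ρ m k : ℕ) : ℝ := classSizeSum p q ρ m k / hammingLayerSize p q ρ m

lemma share_zero : share p q ρ m 0 = 0 := by simp [share, classSizeSum]

lemma share_succ_sub_share (k : ℕ) :
    share p q ρ m (k + 1) - share p q ρ m k = classSize p q ρ m k / hammingLayerSize p q ρ m := by
  rw [share, share, classSizeSum, classSizeSum, sum_range_succ, Nat.cast_add, add_div]
  ring

lemma share_eq_one {k : ℕ} (hN : hammingLayerSize p q ρ m ≠ 0)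
    (h : ∀ j, k ≤ j → classSize p q ρ m j = 0) : share p q ρ m k = 1 := by
  rw [share, classSizeSum_eq_hammingLayerSize h, div_self (Nat.cast_ne_zero.2 hN)]

lemma share_succ_le_share {k : ℕ} (hN : 0 < hammingLayerSize p q ρ m)
    (hN' : 0 < hammingLayerSize p q ρ (m + 1)) (hk : k ≤ q + 1) :
    share p q ρ (m + 1) k ≤ share p q ρ m k := by
  rw [share, share, div_le_div_iff₀ (mod_cast hN') (mod_cast hN)]
  exact_mod_cast classSizeSum_succ_mul_le hk

lemma share_le_share_succ_succ {k : ℕ} (hN : 0 < hammingLayerSize p q ρ m)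
    (hN' : 0 < hammingLayerSize p q ρ (m + 1)) (hk : k ≤ q + 1) :
    share p q ρ m k ≤ share p q ρ (m + 1) (k + 1) := by
  rw [share, share, div_le_div_iff₀ (mod_cast hN) (mod_cast hN')]
  exact_mod_cast classSizeSum_mul_le hk

-- The flow from class `j` of layer `m + 1` to class `j` (inner: a removed element of `{1,…,p}`)
-- and to class `j - 1` (outer: a dropped added element) of layer `m`.
noncomputable def innerFlow (p q ρ m j : ℕ) : ℝ := share p q ρ (m + 1) (j + 1) - share p q ρ m j

noncomputable def outerFlow (p q ρ m j : ℕ) : ℝ := share p q ρ m j - share p q ρ (m + 1) j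

lemma innerFlow_add_outerFlow (j : ℕ) :
    innerFlow p q ρ m j + outerFlow p q ρ m j =
      classSize p q ρ (m + 1) j / hammingLayerSize p q ρ (m + 1) := by
  rw [innerFlow, outerFlow, ← share_succ_sub_share]
  ring

lemma innerFlow_add_outerFlow_succ (j : ℕ) :
    innerFlow p q ρ m j + outerFlow p q ρ m (j + 1) =
      classSize p q ρ m j / hammingLayerSize p q ρ m := by
  rw [innerFlow, outerFlow, ← share_succ_sub_share]
  ring

lemma outerFlow_zero : outerFlow p q ρ m 0 = 0 := by
  rw [outerFlow, share_zero, share_zero, sub_self]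

lemma innerFlow_nonneg {j : ℕ} (hN : 0 < hammingLayerSize p q ρ m)
    (hN' : 0 < hammingLayerSize p q ρ (m + 1)) (hj : j ≤ q + 1) : 0 ≤ innerFlow p q ρ m j :=
  sub_nonneg.2 (share_le_share_succ_succ hN hN' hj)

lemma outerFlow_nonneg {j : ℕ} (hN : 0 < hammingLayerSize p q ρ m)
    (hN' : 0 < hammingLayerSize p q ρ (m + 1)) (hj : j ≤ q + 1) : 0 ≤ outerFlow p q ρ m j :=
  sub_nonneg.2 (share_succ_le_share hN hN' hj)

lemma innerFlow_eq_zero (hs : s ∈ layer p q ρ (m + 1)) (hN : hammingLayerSize p q ρ m ≠ 0)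
    (h : p ≤ numRemoved p s ∨ ρ < numRemoved p s + 1 + numAdded p s) :
    innerFlow p q ρ m (numAdded p s) = 0 := by
  have hrank := hammingRank_add_numRemoved (mem_layer.1 hs).1
  rw [(mem_layer.1 hs).2] at hrank
  have hN' : hammingLayerSize p q ρ (m + 1) ≠ 0 := card_layer p q ρ (m + 1) ▸ card_ne_zero_of_mem hs
  rw [innerFlow, share_eq_one hN' fun j hj => classSize_eq_zero (by omega),
    share_eq_one hN fun j hj => classSize_eq_zero (by omega), sub_self]

-- Each `s` of class `j` has `p - i` inner and `j` outer lower covers.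
noncomputable def flowWeight (p q ρ m : ℕ) (t s : Finset ℕ) : ℝ :=
  if numAdded p t = numAdded p s then
    innerFlow p q ρ m (numAdded p s) /
      ((p - numRemoved p s : ℕ) * classSize p q ρ (m + 1) (numAdded p s))
  else
    outerFlow p q ρ m (numAdded p s) / (numAdded p s * classSize p q ρ (m + 1) (numAdded p s))

lemma flowWeight_nonneg (ht : t ∈ layer p q ρ m) (hs : s ∈ layer p q ρ (m + 1)) :
    0 ≤ flowWeight p q ρ m t s := by
  have hN : 0 < hammingLayerSize p q ρ m := card_layer p q ρ m ▸ card_pos.2 ⟨t, ht⟩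
  have hN' : 0 < hammingLayerSize p q ρ (m + 1) := card_layer p q ρ (m + 1) ▸ card_pos.2 ⟨s, hs⟩
  have hj := numAdded_le (mem_ball.1 (mem_layer.1 hs).1).1
  unfold flowWeight
  split_ifs
  · exact div_nonneg (innerFlow_nonneg hN hN' (by omega)) (by positivity)
  · exact div_nonneg (outerFlow_nonneg hN hN' (by omega)) (by positivity)

lemma ite_erase_mem_ball_flowWeight (hs : s ∈ ball p q ρ) (hx : x ∈ s) :
    (if s.erase x ∈ ball p q ρ then flowWeight p q ρ m (s.erase x) s else 0) =
      if x ∈ Icc 1 p then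
        if numRemoved p s + 1 + numAdded p s ≤ ρ then
          innerFlow p q ρ m (numAdded p s) /
            ((p - numRemoved p s : ℕ) * classSize p q ρ (m + 1) (numAdded p s))
        else 0
      else
        outerFlow p q ρ m (numAdded p s) / (numAdded p s * classSize p q ρ (m + 1) (numAdded p s))
    := by
  by_cases hxp : x ∈ Icc 1 p
  · obtain ⟨-, h⟩ := coords_erase_of_mem_Icc hx hxp
    simp only [erase_mem_ball_iff hs hx, hxp, forall_const, if_true, flowWeight, h]
  · obtain ⟨-, h⟩ := coords_erase_of_notMem_Icc hx hxp
    rw [if_pos ((erase_mem_ball_iff hs hx).2 fun h => absurd h hxp), if_neg hxp, flowWeight,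
      if_neg (by omega)]

lemma sum_flowWeight_below (hs : s ∈ layer p q ρ (m + 1)) :
    ∑ t ∈ layer p q ρ m with t ≤ s, flowWeight p q ρ m t s =
      1 / hammingLayerSize p q ρ (m + 1) := by
  have hN : 0 < hammingLayerSize p q ρ m :=
    card_layer p q ρ m ▸ (layer_nonempty_of_mem_succ hs).card_pos
  have hc : (0 : ℝ) < classSize p q ρ (m + 1) (numAdded p s) :=
    mod_cast classSize_pos_of_mem_layer hs
  rw [sum_layer_le_eq_sum_erase hs, sum_congr rfl fun x hx =>
      ite_erase_mem_ball_flowWeight (mem_layer.1 hs).1 hx, sum_ite, sum_const, sum_const,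
    filter_mem_eq_inter, filter_notMem_eq_sdiff, card_inter_Icc, nsmul_eq_mul, nsmul_eq_mul]
  set i := numRemoved p s
  set j := numAdded p s
  have hinner : ((p - i : ℕ) : ℝ) * (if i + 1 + j ≤ ρ then
      innerFlow p q ρ m j / ((p - i : ℕ) * classSize p q ρ (m + 1) j) else 0) =
      innerFlow p q ρ m j / classSize p q ρ (m + 1) j := by
    split_ifs with h
    · exact natCast_mul_div_natCast_mul _ fun h0 => innerFlow_eq_zero hs hN.ne' (by omega)
    · rw [mul_zero, innerFlow_eq_zero hs hN.ne' (by omega), zero_div]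
  rw [hinner, show ((#(s \ Icc 1 p) : ℕ) : ℝ) = j from rfl,
    natCast_mul_div_natCast_mul _ fun h => h ▸ outerFlow_zero, ← add_div,
    innerFlow_add_outerFlow]
  field_simp

lemma flowWeight_insert_of_mem_Icc (ht : t ∈ layer p q ρ m) (hxp : x ∈ Icc 1 p) (hxt : x ∉ t) :
    flowWeight p q ρ m t (insert x t) =
      innerFlow p q ρ m (numAdded p t) / (numRemoved p t * classSize p q ρ m (numAdded p t)) := by
  have hx : x ∈ Icc 1 (p + q) \ t :=
    mem_sdiff.2 ⟨Icc_subset_Icc_right (Nat.le_add_right p q) hxp, hxt⟩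
  have hins := (insert_mem_ball_iff (mem_layer.1 ht).1 hx).2 fun h => absurd hxp h
  have hcs := classSize_of_mem_layer (insert_mem_layer ht hxt hins)
  obtain ⟨h₁, h₂⟩ := coords_erase_of_mem_Icc (mem_insert_self x t) hxp
  rw [erase_insert hxt] at h₁ h₂
  rw [flowWeight, if_pos h₂, hcs, ← h₂, classSize_of_mem_layer ht, h₁]
  congr 1
  generalize numRemoved p (insert x t) = a
  have := Nat.choose_succ_right_eq p a
  exact_mod_cast (show (p - a) * (p.choose a * q.choose (numAdded p t)) =
      (a + 1) * (p.choose (a + 1) * q.choose (numAdded p t)) by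
    rw [← mul_assoc, ← mul_assoc, mul_comm (a + 1), this]; ring)

lemma flowWeight_insert_of_notMem_Icc (ht : t ∈ layer p q ρ m) (hxp : x ∉ Icc 1 p) (hxt : x ∉ t)
    (hins : insert x t ∈ ball p q ρ) :
    flowWeight p q ρ m t (insert x t) =
      outerFlow p q ρ m (numAdded p t + 1) /
        ((q - numAdded p t : ℕ) * classSize p q ρ m (numAdded p t)) := by
  have hcs := classSize_of_mem_layer (insert_mem_layer ht hxt hins)
  obtain ⟨h₁, h₂⟩ := coords_erase_of_notMem_Icc (mem_insert_self x t) hxp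
  rw [erase_insert hxt] at h₁ h₂
  rw [flowWeight, if_neg (by omega), hcs, classSize_of_mem_layer ht, ← h₂, ← h₁]
  congr 1
  generalize numAdded p t = j
  have := Nat.choose_succ_right_eq q j
  exact_mod_cast (show (j + 1) * (p.choose (numRemoved p t) * q.choose (j + 1)) =
      (q - j) * (p.choose (numRemoved p t) * q.choose j) by
    rw [mul_left_comm, mul_comm (j + 1), this]; ring)

lemma ite_insert_mem_ball_flowWeight (ht : t ∈ layer p q ρ m) (hx : x ∈ Icc 1 (p + q) \ t) :
    (if insert x t ∈ ball p q ρ then flowWeight p q ρ m t (insert x t) else 0) =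
      if x ∈ Icc 1 p then
        innerFlow p q ρ m (numAdded p t) / (numRemoved p t * classSize p q ρ m (numAdded p t))
      else if numRemoved p t + numAdded p t + 1 ≤ ρ then
        outerFlow p q ρ m (numAdded p t + 1) /
          ((q - numAdded p t : ℕ) * classSize p q ρ m (numAdded p t))
      else 0 := by
  have hball := (mem_layer.1 ht).1
  have hxt := (mem_sdiff.1 hx).2
  by_cases hxp : x ∈ Icc 1 p
  · rw [if_pos ((insert_mem_ball_iff hball hx).2 fun h => absurd hxp h), if_pos hxp,
      flowWeight_insert_of_mem_Icc ht hxp hxt]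
  · rw [if_neg hxp]
    by_cases hρ : numRemoved p t + numAdded p t + 1 ≤ ρ
    · have hins := (insert_mem_ball_iff hball hx).2 fun _ => hρ
      rw [if_pos hins, if_pos hρ, flowWeight_insert_of_notMem_Icc ht hxp hxt hins]
    · rw [if_neg fun h => hρ ((insert_mem_ball_iff hball hx).1 h hxp), if_neg hρ]

lemma sum_flowWeight_above_le (ht : t ∈ layer p q ρ m) :
    ∑ s ∈ layer p q ρ (m + 1) with t ≤ s, flowWeight p q ρ m t s ≤
      1 / hammingLayerSize p q ρ m := by
  rcases (layer p q ρ (m + 1)).eq_empty_or_nonempty with hempty | ⟨s₀, hs₀⟩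
  · rw [hempty, filter_empty, sum_empty]
    positivity
  have hN : 0 < hammingLayerSize p q ρ m := card_layer p q ρ m ▸ card_pos.2 ⟨t, ht⟩
  have hN' : 0 < hammingLayerSize p q ρ (m + 1) :=
    card_layer p q ρ (m + 1) ▸ card_pos.2 ⟨s₀, hs₀⟩
  have hj : numAdded p t ≤ q := numAdded_le (mem_ball.1 (mem_layer.1 ht).1).1
  have hc : (0 : ℝ) ≤ classSize p q ρ m (numAdded p t) := Nat.cast_nonneg _
  rw [sum_layer_succ_ge_eq_sum_insert ht,
    sum_congr rfl fun x hx => ite_insert_mem_ball_flowWeight ht hx, sum_ite, sum_const, sum_const,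
    filter_mem_eq_inter, filter_notMem_eq_sdiff, card_Icc_sdiff_inter_Icc,
    card_Icc_sdiff_sdiff_Icc (mem_ball.1 (mem_layer.1 ht).1).1, nsmul_eq_mul, nsmul_eq_mul]
  calc _ ≤ innerFlow p q ρ m (numAdded p t) / classSize p q ρ m (numAdded p t) +
        outerFlow p q ρ m (numAdded p t + 1) / classSize p q ρ m (numAdded p t) := by
        refine add_le_add (natCast_mul_div_natCast_mul_le _
          (innerFlow_nonneg hN hN' (by omega)) hc) ?_
        split_ifs
        · exact natCast_mul_div_natCast_mul_le _ (outerFlow_nonneg hN hN' (by omega)) hc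
        · rw [mul_zero]
          exact div_nonneg (outerFlow_nonneg hN hN' (by omega)) hc
    _ = 1 / hammingLayerSize p q ρ m := by
        rw [← add_div, innerFlow_add_outerFlow_succ]
        field_simp [(classSize_pos_of_mem_layer ht).ne']

theorem hasNormalizedMatching_ball (p q ρ : ℕ) :
    HasNormalizedMatching (ball p q ρ) (hammingRank p ρ) := by
  intro m B hB
  rw [card_layer, card_layer, div_eq_mul_inv, div_eq_mul_inv]
  exact card_mul_le_card_filter_exists_mul_of_flow (· ≤ ·) (flowWeight p q ρ m)
    (fun t ht s hs _ => flowWeight_nonneg ht hs)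
    (fun s hs => ((sum_flowWeight_below hs).trans (one_div _)).ge)
    (fun t ht => (sum_flowWeight_above_le ht).trans_eq (one_div _)) hB

end HammingBall

/-- **The Hamming ball `B_ρ[p,q]` is a LYM poset**: every antichain `A` (with respect
to inclusion) of subsets `S ⊆ {1,…,p+q}` with `|S ∆ {1,…,p}| ≤ ρ` satisfies
`∑_{S ∈ A} 1 / N_{r(S)} ≤ 1`. -/
theorem hammingBall_isLYM (p q ρ : ℕ) (A : Finset (Finset ℕ))
    (hA : ∀ S ∈ A, memHammingBall p q ρ S)
    (hanti : IsAntichain (· ⊆ ·) (A : Set (Finset ℕ))) :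
    ∑ S ∈ A, (1 : ℝ) / hammingLayerSize p q ρ (hammingRank p ρ S) ≤ 1 := by
  have hAball : A ⊆ HammingBall.ball p q ρ := fun S hS =>
    mem_filter.2 ⟨mem_powerset.2 (hA S hS).1, hA S hS⟩
  have := (HammingBall.hasNormalizedMatching_ball p q ρ).sum_inv_card_rankLayer_le_one
    HammingBall.strictMonoOn_hammingRank hAball hanti
  simpa only [HammingBall.card_layer] using this
end

section
/- Let P and Q be finite log-concave posets. Then the product poset P × Q is log-concave: its layer sizes s_m = |(P×Q)_m| satisfy s_m² ≥ s_{m-1}·s_{m+1} for all m ≥ 1. -/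
/-- The rank of an element of a (finite) poset: the length of the longest
chain strictly below it (equivalently, `r(x) = 0` for minimal `x` and
`r(x) = max {r(y) : y < x} + 1` otherwise). -/
noncomputable def rk {P : Type*} [Preorder P] (x : P) : ℕ :=
  (Order.height x).toNat

/-- The `k`-th layer of a poset: the set of elements of rank `k`. -/
def layerSet (P : Type*) [Preorder P] (k : ℕ) : Set P := {x : P | rk x = k}

/-- The size of the `k`-th layer. -/
noncomputable def layerCard (P : Type*) [Preorder P] (k : ℕ) : ℕ := (layerSet P k).ncard

/-- A finite poset is LYM if every antichain `A` satisfies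
`∑_{x ∈ A} 1 / |P_{r(x)}| ≤ 1`. -/
def IsLYM (P : Type*) [PartialOrder P] [Fintype P] : Prop :=
  ∀ A : Finset P, IsAntichain (· ≤ ·) (A : Set P) →
    ∑ x ∈ A, (1 : ℝ) / layerCard P (rk x) ≤ 1

/-- A poset is log-concave if its layer sizes `p_k` satisfy
`p_k ^ 2 ≥ p_{k-1} * p_{k+1}` for all `k ≥ 1`. -/
def LayerLogConcave (P : Type*) [Preorder P] : Prop :=
  ∀ k : ℕ, 1 ≤ k → layerCard P (k - 1) * layerCard P (k + 1) ≤ layerCard P k ^ 2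

/-!
Ranks add in a product, `r (x, y) = r x + r y`, so the layer sizes of `P × Q` are the Cauchy
product of those of `P` and `Q`. The layer sizes of a finite poset have no internal zeros, since
an element of rank `k` lies above elements of every smaller rank. A nonnegative log-concave
sequence without internal zeros is a Pólya frequency sequence of order 2: its Toeplitz kernel
`(i, j) ↦ a (j - i)` has nonnegative `2 × 2` minors. By the Cauchy–Binet formula the product of
two such kernels again has nonnegative `2 × 2` minors, and for adjacent rows and columns of the
Cauchy product this is log-concavity.
-/

open Finset

section CauchyBinet

variable {ι R : Type*}

theorem two_mul_sum_mul_sum_sub_sum_mul_sum [CommRing R] (s : Finset ι) (u v x y : ι → R) :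
    2 * ((∑ i ∈ s, u i * x i) * (∑ j ∈ s, v j * y j) -
        (∑ i ∈ s, u i * y i) * (∑ j ∈ s, v j * x j)) =
      ∑ i ∈ s, ∑ j ∈ s, (u i * v j - u j * v i) * (x i * y j - x j * y i) := by
  set T : ι → ι → R := fun i j => u i * x i * (v j * y j) - u i * y i * (v j * x j)
  have hT : ∑ i ∈ s, ∑ j ∈ s, T i j =
      (∑ i ∈ s, u i * x i) * (∑ j ∈ s, v j * y j) -
        (∑ i ∈ s, u i * y i) * (∑ j ∈ s, v j * x j) := by
    simp only [T, sum_mul_sum, ← sum_sub_distrib]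
  calc _ = ∑ i ∈ s, ∑ j ∈ s, T i j + ∑ i ∈ s, ∑ j ∈ s, T j i := by
        rw [sum_comm (f := fun i j => T j i), hT]; ring
    _ = _ := by
        simp only [← sum_add_distrib]
        refine sum_congr rfl fun i _ => sum_congr rfl fun j _ => ?_
        ring

theorem sum_mul_sum_le_sum_mul_sum [LinearOrder ι] [CommRing R] [LinearOrder R]
    [IsStrictOrderedRing R] (s : Finset ι) (u v x y : ι → R)
    (huv : ∀ i j, i < j → u j * v i ≤ u i * v j)
    (hxy : ∀ i j, i < j → x j * y i ≤ x i * y j) :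
    (∑ i ∈ s, u i * y i) * (∑ j ∈ s, v j * x j) ≤
      (∑ i ∈ s, u i * x i) * (∑ j ∈ s, v j * y j) := by
  have hminors :
      0 ≤ ∑ i ∈ s, ∑ j ∈ s, (u i * v j - u j * v i) * (x i * y j - x j * y i) := by
    refine sum_nonneg fun i _ => sum_nonneg fun j _ => ?_
    rcases lt_trichotomy i j with hij | rfl | hji
    · exact mul_nonneg (sub_nonneg.2 (huv i j hij)) (sub_nonneg.2 (hxy i j hij))
    · simp
    · exact mul_nonneg_of_nonpos_of_nonpos (sub_nonpos.2 (huv j i hji))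
        (sub_nonpos.2 (hxy j i hji))
  linarith [two_mul_sum_mul_sum_sub_sum_mul_sum s u v x y]

end CauchyBinet

section PF2

variable {R : Type*} [CommRing R] [LinearOrder R] [IsStrictOrderedRing R] {a b : ℤ → R}

/-- A Pólya frequency sequence of order 2. Sequences are indexed by `ℤ` so that the shifts
`k ± 1` involve no truncated subtraction. -/
structure IsPF2 (a : ℤ → R) : Prop where
  nonneg : ∀ k, 0 ≤ a k
  logConcave : ∀ k, a (k - 1) * a (k + 1) ≤ a k ^ 2
  ordConnected_support : (Function.support a).OrdConnected

theorem IsPF2.mul_le_mul_of_lt (ha : IsPF2 a) {i j : ℤ} (hij : i < j) :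
    a i * a (j + 1) ≤ a (i + 1) * a j := by
  induction j, hij using Int.leInduction with
  | base => simpa [sq] using ha.logConcave (i + 1)
  | succ j hij ih =>
    by_cases hzero : a i = 0 ∨ a (j + 1 + 1) = 0
    · rcases hzero with h | h <;>
        simp [h, mul_nonneg (ha.nonneg (i + 1)) (ha.nonneg (j + 1))]
    push Not at hzero
    have hpos : ∀ k, i < k → k < j + 1 + 1 → 0 < a k := fun k hik hkj =>
      (ha.nonneg k).lt_of_ne' <| ha.ordConnected_support.out hzero.1 hzero.2 ⟨hik.le, hkj.le⟩
    have hj : 0 < a j * a (j + 1) :=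
      mul_pos (hpos j (by omega) (by omega)) (hpos _ (by omega) (by omega))
    have hlc := ha.logConcave (j + 1)
    rw [add_sub_cancel_right] at hlc
    refine le_of_mul_le_mul_right ?_ hj
    calc a i * a (j + 1 + 1) * (a j * a (j + 1))
        = (a i * a (j + 1)) * (a j * a (j + 1 + 1)) := by ring
      _ ≤ (a (i + 1) * a j) * a (j + 1) ^ 2 :=
          mul_le_mul ih hlc (mul_nonneg (ha.nonneg _) (ha.nonneg _))
            (mul_nonneg (ha.nonneg _) (ha.nonneg _))
      _ = a (i + 1) * a (j + 1) * (a j * a (j + 1)) := by ring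

end PF2

section CauchyProduct

variable {R : Type*}

noncomputable def cauchyProduct [NonUnitalNonAssocSemiring R] (a b : ℤ → R) (n : ℤ) : R :=
  ∑ k ∈ Icc 0 n, a k * b (n - k)

theorem cauchyProduct_eq_sum_of_subset [NonUnitalNonAssocSemiring R] {a b : ℤ → R}
    (ha : ∀ k < 0, a k = 0) (hb : ∀ k < 0, b k = 0) {n : ℤ} {s : Finset ℤ}
    (hs : Icc 0 n ⊆ s) : cauchyProduct a b n = ∑ k ∈ s, a k * b (n - k) := by
  refine sum_subset hs fun k _ hk => ?_
  rcases lt_or_ge k 0 with hk0 | hk0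
  · rw [ha k hk0, zero_mul]
  · rw [hb (n - k) (by simp_all), mul_zero]

theorem IsPF2.cauchyProduct_mul_le_sq [CommRing R] [LinearOrder R] [IsStrictOrderedRing R]
    {a b : ℤ → R} (ha : IsPF2 a) (hb : IsPF2 b) (ha0 : ∀ k < 0, a k = 0)
    (hb0 : ∀ k < 0, b k = 0) (n : ℤ) :
    cauchyProduct a b (n - 1) * cauchyProduct a b (n + 1) ≤ cauchyProduct a b n ^ 2 := by
  set s := Ico (-1) (n + 1)
  have hshifted : ∀ m ≤ n + 1, ∑ k ∈ s, a (k + 1) * b (m - (k + 1)) = cauchyProduct a b m :=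
    fun m hm => by
      rw [sum_Ico_add' (fun j => a j * b (m - j)), cauchyProduct_eq_sum_of_subset ha0 hb0]
      intro k; simp only [mem_Icc, mem_Ico]; omega
  have hunshifted : ∀ m ≤ n, ∑ k ∈ s, a k * b (m - k) = cauchyProduct a b m :=
    fun m hm => by
      rw [cauchyProduct_eq_sum_of_subset ha0 hb0]
      intro k; simp only [s, mem_Icc, mem_Ico]; omega
  -- the minor of the product kernel with rows `a (· + 1)`, `a` and columns `b (n - (· + 1))`,
  -- `b (n - ·)`: its diagonal entries are `cauchyProduct a b n`, the others at `n ± 1`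
  have key := sum_mul_sum_le_sum_mul_sum s
    (fun k => a (k + 1)) a (fun k => b (n - (k + 1))) (fun k => b (n - k))
    (fun i j hij => (mul_comm _ _).trans_le (ha.mul_le_mul_of_lt hij))
    (fun i j hij => by
      have := hb.mul_le_mul_of_lt (show n - (j + 1) < n - (i + 1) by omega)
      rwa [show n - (i + 1) + 1 = n - i by ring, show n - (j + 1) + 1 = n - j by ring,
        mul_comm (b (n - j))] at this)
  calc cauchyProduct a b (n - 1) * cauchyProduct a b (n + 1)
      = (∑ k ∈ s, a (k + 1) * b (n + 1 - (k + 1))) * ∑ k ∈ s, a k * b (n - 1 - k) := by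
        rw [hshifted _ le_rfl, hunshifted _ (by omega), mul_comm]
    _ = (∑ k ∈ s, a (k + 1) * b (n - k)) * ∑ k ∈ s, a k * b (n - (k + 1)) := by
        congr 1 <;> refine sum_congr rfl fun k _ => ?_ <;> ring_nf
    _ ≤ (∑ k ∈ s, a (k + 1) * b (n - (k + 1))) * ∑ k ∈ s, a k * b (n - k) := key
    _ = cauchyProduct a b n ^ 2 := by
        rw [hshifted _ (by omega), hunshifted _ le_rfl, sq]

end CauchyProduct

namespace Order

variable {α β : Type*} [Preorder α] [Preorder β]

theorem height_lt_top_of_finite [Finite α] (x : α) : height x < ⊤ := by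
  have := Fintype.ofFinite α
  refine (height_le fun p _ => ?_).trans_lt (ENat.natCast_lt_top (Fintype.card α))
  exact_mod_cast p.length_lt_card.le

theorem height_add_height_le_height_prod (x : α) (y : β) :
    height x + height y ≤ height (x, y) := by
  cases hx : height x with
  | top =>
    simpa [hx] using height_le_height_apply_of_strictMono _
      (fun _ _ h => Prod.mk_lt_mk_iff_left.2 h : StrictMono fun a : α => (a, y)) x
  | coe n =>
    induction n generalizing x with
    | zero =>
      simpa using height_le_height_apply_of_strictMono _
        (fun _ _ h => Prod.mk_lt_mk_iff_right.2 h : StrictMono fun b : β => (x, b)) y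
    | succ n ih =>
      obtain ⟨-, ⟨x', hx'x, hx'⟩, -⟩ := height_eq_coe_add_one_iff.1 (by exact_mod_cast hx)
      calc ((n + 1 : ℕ) : ℕ∞) + height y = n + height y + 1 := by push_cast; ring
        _ ≤ height (x', y) + 1 := by grw [ih x' hx']
        _ ≤ height (x, y) := height_add_one_le (Prod.mk_lt_mk_iff_left.2 hx'x)

theorem height_prod_le [WellFoundedLT α] [WellFoundedLT β] (p : α × β) :
    height p ≤ height p.1 + height p.2 := by
  induction p using WellFoundedLT.induction with
  | _ p ih =>
  rw [height_eq_iSup_lt_height]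
  refine iSup₂_le fun q hqp => ?_
  grw [ih q hqp]
  rcases Prod.lt_iff.1 hqp with ⟨h1, h2⟩ | ⟨h1, h2⟩
  · grw [add_right_comm, height_add_one_le h1, height_mono h2]
  · grw [add_assoc, height_add_one_le h2, height_mono h1]

theorem height_prod [WellFoundedLT α] [WellFoundedLT β] (x : α) (y : β) :
    height (x, y) = height x + height y :=
  (height_prod_le (x, y)).antisymm (height_add_height_le_height_prod x y)

end Order

section Layers

variable {P Q : Type*} [Preorder P] [Preorder Q]

theorem rk_prod [Finite P] [Finite Q] (x : P) (y : Q) : rk (x, y) = rk x + rk y :=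
  (congrArg ENat.toNat (Order.height_prod x y)).trans <|
    ENat.toNat_add (Order.height_lt_top_of_finite x).ne (Order.height_lt_top_of_finite y).ne

theorem exists_lt_rk_eq [Finite P] {x : P} {j : ℕ} (hj : j < rk x) : ∃ y < x, rk y = j := by
  have hfin := Order.height_lt_top_of_finite x
  obtain ⟨y, hyx, hy⟩ := (Order.coe_lt_height_iff hfin).1 (by
    rwa [rk, ← ENat.natCast_lt_natCast, ENat.natCast_toNat hfin.ne] at hj)
  exact ⟨y, hyx, by simp [rk, hy]⟩

variable (P) [Fintype P]

noncomputable def layerCount (k : ℤ) : ℤ := #{x : P | (rk x : ℤ) = k}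

theorem layerCount_natCast (k : ℕ) : layerCount P k = layerCard P k := by
  rw [layerCount, layerCard, layerSet, Set.ncard_eq_toFinset_card']
  congr 2
  ext x
  simp

theorem layerCount_of_neg {k : ℤ} (hk : k < 0) : layerCount P k = 0 := by
  simp only [layerCount, Nat.cast_eq_zero, card_eq_zero, filter_eq_empty_iff]
  omega

variable {P}

theorem layerCount_ne_zero_iff {k : ℤ} :
    layerCount P k ≠ 0 ↔ ∃ x : P, (rk x : ℤ) = k := by
  simp [layerCount, filter_eq_empty_iff]

theorem layerCount_prod [Fintype Q] (n : ℤ) :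
    layerCount (P × Q) n = cauchyProduct (layerCount P) (layerCount Q) n := by
  classical
  rw [layerCount, card_eq_sum_card_fiberwise (f := fun z => (rk z.1 : ℤ)) (t := Icc 0 n)]
  · push_cast
    refine sum_congr rfl fun k _ => ?_
    rw [layerCount, layerCount, ← Nat.cast_mul, ← card_product]
    congr 2
    ext ⟨x, y⟩
    simp only [mem_filter, mem_univ, true_and, mem_product, rk_prod]
    omega
  · rintro ⟨x, y⟩ hxy
    simp only [coe_filter, mem_univ, true_and, Set.mem_ofPred_eq, coe_Icc, Set.mem_Icc,
      rk_prod] at hxy ⊢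
    omega

theorem LayerLogConcave.isPF2_layerCount (h : LayerLogConcave P) : IsPF2 (layerCount P) where
  nonneg _ := Nat.cast_nonneg _
  logConcave k := by
    rcases lt_or_ge k 1 with hk | hk
    · rw [layerCount_of_neg P (by omega), zero_mul]
      positivity
    · lift k to ℕ using by omega
      have := h k (by omega)
      rw [show (k : ℤ) - 1 = (k - 1 : ℕ) by omega, show (k : ℤ) + 1 = (k + 1 : ℕ) by omega]
      simp only [layerCount_natCast]
      exact_mod_cast this
  ordConnected_support := ⟨fun i hi k hk j ⟨hij, hjk⟩ => by
    obtain ⟨x, hx⟩ := layerCount_ne_zero_iff.1 hi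
    obtain ⟨z, hz⟩ := layerCount_ne_zero_iff.1 hk
    rw [Function.mem_support, layerCount_ne_zero_iff]
    rcases hjk.eq_or_lt with rfl | hjk
    · exact ⟨z, hz⟩
    · obtain ⟨y, -, hy⟩ := exists_lt_rk_eq (x := z) (j := j.toNat) (by omega)
      exact ⟨y, by omega⟩⟩

end Layers

/-- If `P` and `Q` are finite log-concave posets, then the product poset `P × Q`
is log-concave: its layer sizes `s_m` satisfy `s_m ^ 2 ≥ s_{m-1} * s_{m+1}` for `m ≥ 1`. -/
theorem product_of_logConcave_is_logConcave {P Q : Type*}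
    [Fintype P] [PartialOrder P] [Fintype Q] [PartialOrder Q]
    (hPlc : LayerLogConcave P) (hQlc : LayerLogConcave Q) :
    LayerLogConcave (P × Q) := by
  intro n hn
  have h := hPlc.isPF2_layerCount.cauchyProduct_mul_le_sq hQlc.isPF2_layerCount
    (fun _ => layerCount_of_neg P) (fun _ => layerCount_of_neg Q) n
  simp only [← layerCount_prod] at h
  rw [show (n : ℤ) - 1 = (n - 1 : ℕ) by omega, show (n : ℤ) + 1 = (n + 1 : ℕ) by omega] at h
  simp only [layerCount_natCast] at h
  exact_mod_cast h
end

section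
/- Let P be a finite poset in which the LYM inequality holds for all antichains contained in two consecutive layers; that is, for all k and every antichain A ⊆ P_k ∪ P_{k+1}, ∑_{x∈A} 1/|P_{r(x)}| ≤ 1. Then P admits a unit flow: there exists a probability distribution w on the set of chains of P such that for every x ∈ P, the total w-weight of the chains containing x equals 1/|P_{r(x)}|. -/
/-- A unit flow on a finite poset `P`: a probability distribution `w` on the set of
chains of `P` such that for every `x`, the total weight of chains containing `x`
is `1 / |P_{r(x)}|`. -/
def IsUnitFlow {P : Type*} [PartialOrder P] [Fintype P] [DecidableEq P]
    (w : Finset P → ℝ) : Prop :=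
  (∀ C : Finset P, 0 ≤ w C) ∧
  (∀ C : Finset P, ¬ IsChain (· ≤ ·) (C : Set P) → w C = 0) ∧
  (∑ C : Finset P, w C = 1) ∧
  (∀ x : P, ∑ C : Finset P, (if x ∈ C then w C else 0) = 1 / layerCard P (rk x))



open Finset

section Rank

variable {P : Type*} [Fintype P] [Preorder P]

lemma height_lt_top (x : P) : Order.height x < ⊤ :=
  (Order.height_le fun p _ => by exact_mod_cast p.length_lt_card.le).trans_lt
    (ENat.natCast_lt_top _)

lemma coe_rk (x : P) : (rk x : ℕ∞) = Order.height x :=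
  ENat.natCast_toNat (height_lt_top x).ne

lemma rk_strictMono : StrictMono (rk : P → ℕ) := fun x y hxy => by
  exact_mod_cast (coe_rk x).trans_lt <|
    (Order.height_strictMono hxy (height_lt_top x)).trans_eq (coe_rk y).symm

lemma exists_lt_rk_eq_of_rk_eq_add_one {y : P} {k : ℕ} (hy : rk y = k + 1) :
    ∃ x < y, rk x = k := by
  have : Order.height y = k + 1 := by rw [← coe_rk, hy]; rfl
  obtain ⟨-, ⟨x, hxy, hx⟩, -⟩ := Order.height_eq_coe_add_one_iff.1 this
  exact ⟨x, hxy, by exact_mod_cast (coe_rk x).trans hx⟩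

lemma layerCard_eq_card_filter (k : ℕ) : layerCard P k = #({x | rk x = k} : Finset P) := by
  rw [layerCard, layerSet, ← Set.ncard_coe_finset]
  simp

lemma layerCard_pos_of_le_rk {y : P} {k : ℕ} (hk : k ≤ rk y) : 0 < layerCard P k := by
  obtain ⟨d, hd⟩ := Nat.exists_eq_add_of_le hk
  induction d generalizing y with
  | zero => exact (layerCard_eq_card_filter (P := P) k) ▸ card_pos.2 ⟨y, by simpa using hd⟩
  | succ d ih =>
    obtain ⟨x, -, hx⟩ := exists_lt_rk_eq_of_rk_eq_add_one (hd.trans (k.add_succ d))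
    exact ih (by omega) hx

end Rank

def IsLYMOnConsecutiveLayers (P : Type*) [PartialOrder P] [Fintype P] : Prop :=
  ∀ (k : ℕ) (A : Finset P), (∀ x ∈ A, rk x = k ∨ rk x = k + 1) →
    IsAntichain (· ≤ ·) (A : Set P) → ∑ x ∈ A, (1 : ℝ) / layerCard P (rk x) ≤ 1

section NormalizedMatching

variable {P : Type*} [Fintype P] [PartialOrder P]

omit [Fintype P] in
lemma sum_one_div_layerCard_of_forall_rk_eq {s : Finset P} {k : ℕ} (hs : ∀ x ∈ s, rk x = k) :
    ∑ x ∈ s, (1 : ℝ) / layerCard P (rk x) = #s / layerCard P k := by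
  rw [sum_congr rfl fun x hx => by rw [hs x hx], sum_const, nsmul_eq_mul, mul_one_div]

open scoped Classical in
theorem card_mul_layerCard_succ_le (h : IsLYMOnConsecutiveLayers P) {k : ℕ} {S : Finset P}
    (hS : ∀ x ∈ S, rk x = k) :
    #S * layerCard P (k + 1) ≤ #{y | rk y = k + 1 ∧ ∃ x ∈ S, x < y} * layerCard P k := by
  set U : Finset P := {y | rk y = k + 1 ∧ ∃ x ∈ S, x < y}
  set L : Finset P := {y | rk y = k + 1}
  obtain rfl | ⟨x₀, hx₀⟩ := S.eq_empty_or_nonempty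
  · simp
  obtain hq | hq := (layerCard P (k + 1)).eq_zero_or_pos
  · simp [hq]
  have hp : 0 < layerCard P k := layerCard_pos_of_le_rk (hS x₀ hx₀).ge
  have hUL : U ⊆ L := monotone_filter_right _ fun _ _ => And.left
  have hL : ∀ y ∈ L \ U, rk y = k + 1 := fun y hy => (mem_filter.1 (mem_sdiff.1 hy).1).2
  have hrk : ∀ x ∈ S ∪ (L \ U), rk x = k ∨ rk x = k + 1 := fun x hx =>
    (mem_union.1 hx).imp (hS x) (hL x)
  have hdisj : Disjoint S (L \ U) := disjoint_left.2 fun x hxS hxL => by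
    have := hS x hxS; have := hL x hxL; omega
  have hA : IsAntichain (· ≤ ·) ((S ∪ (L \ U) : Finset P) : Set P) := by
    intro a ha b hb hab hle
    have hlt := lt_of_le_of_ne hle hab
    have hr := rk_strictMono hlt
    have haS : a ∈ S := (mem_union.1 ha).resolve_right fun haL => by
      have := hL a haL; have := hrk b hb; omega
    have hbL : b ∈ L \ U := (mem_union.1 hb).resolve_left fun hbS => by
      have := hS a haS; have := hS b hbS; omega
    exact (mem_sdiff.1 hbL).2 (mem_filter.2 ⟨mem_univ b, hL b hbL, a, haS, hlt⟩)
  have hLYM := h k _ hrk hA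
  rw [sum_union hdisj, sum_one_div_layerCard_of_forall_rk_eq hS,
    sum_one_div_layerCard_of_forall_rk_eq hL, card_sdiff_of_subset hUL,
    ← layerCard_eq_card_filter, Nat.cast_sub (layerCard_eq_card_filter (P := P) (k + 1) ▸
      card_le_card hUL), sub_div, div_self (by positivity)] at hLYM
  have key : (#S : ℝ) / layerCard P k ≤ #U / layerCard P (k + 1) := by linarith
  exact_mod_cast (div_le_div_iff₀ (by positivity) (by positivity)).1 key

end NormalizedMatching

section LayerTransition

variable {P : Type*} [Fintype P] [PartialOrder P]

structure IsLayerTransition (k : ℕ) (T : P → P → ℝ) : Prop where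
  nonneg : ∀ x y, 0 ≤ T x y
  rel_of_ne_zero : ∀ {x y}, T x y ≠ 0 → rk x = k ∧ x < y ∧ rk y = k + 1
  sum_row : ∀ x, rk x = k → ∑ y, T x y = 1
  sum_col : ∀ y, rk y = k + 1 → ∑ x, T x y = layerCard P k / layerCard P (k + 1)

abbrev LayerCopies (P : Type*) [Preorder P] (k n : ℕ) := {x : P // rk x = k} × Fin n

open scoped Classical

lemma LayerCopies.card (k n : ℕ) : Fintype.card (LayerCopies P k n) = layerCard P k * n := by
  simp [Fintype.card_subtype, layerCard_eq_card_filter]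

lemma LayerCopies.card_filter_val_fst_eq {k n : ℕ} {x : P} (hx : rk x = k) :
    #{a : LayerCopies P k n | a.1.1 = x} = n := by
  rw [show ({a | a.1.1 = x} : Finset (LayerCopies P k n)) = {⟨x, hx⟩} ×ˢ univ by
    ext ⟨⟨z, hz⟩, i⟩; simp [Prod.ext_iff, eq_comm]]
  simp

theorem exists_injective_layerCopies (h : IsLYMOnConsecutiveLayers P) (k : ℕ) :
    ∃ f : LayerCopies P k (layerCard P (k + 1)) → LayerCopies P (k + 1) (layerCard P k),
      Function.Injective f ∧ ∀ a, a.1.1 < (f a).1.1 := by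
  set p := layerCard P k
  set q := layerCard P (k + 1)
  refine (Fintype.all_card_le_filter_rel_iff_exists_injective fun (a : LayerCopies P k q)
    (b : LayerCopies P (k + 1) p) => a.1.1 < b.1.1).1 fun A => ?_
  set S := A.image (·.1.1)
  have hS : ∀ x ∈ S, rk x = k := fun x hx => by
    obtain ⟨a, -, rfl⟩ := mem_image.1 hx
    exact a.1.2
  set U : Finset P := {y | rk y = k + 1 ∧ ∃ x ∈ S, x < y}
  calc #A ≤ q * #S := card_le_mul_card_image A q fun x hx =>
        (card_le_card (filter_subset_filter _ (subset_univ A))).trans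
          (LayerCopies.card_filter_val_fst_eq (hS x hx)).le
    _ ≤ p * #U := by rw [mul_comm q, mul_comm p]; exact card_mul_layerCard_succ_le h hS
    _ ≤ _ := by
      refine mul_card_image_le_card_of_maps_to (f := (·.1.1)) (t := U) ?_ p fun y hy => ?_
      · intro b hb
        obtain ⟨-, a, ha, hab⟩ := mem_filter.1 (mem_coe.1 hb)
        exact mem_coe.2 (mem_filter.2 ⟨mem_univ _, b.1.2, a.1.1, mem_image_of_mem _ ha, hab⟩)
      · obtain ⟨hy, x, hx, hxy⟩ := (mem_filter.1 hy).2
        obtain ⟨a, ha, rfl⟩ := mem_image.1 hx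
        refine (LayerCopies.card_filter_val_fst_eq hy).ge.trans (card_le_card fun b hb => ?_)
        rw [mem_filter] at hb ⊢
        exact ⟨mem_filter.2 ⟨mem_univ _, a, ha, hb.2 ▸ hxy⟩, hb.2⟩

theorem exists_isLayerTransition (h : IsLYMOnConsecutiveLayers P) {k : ℕ}
    (hk : 0 < layerCard P (k + 1)) : ∃ T : P → P → ℝ, IsLayerTransition k T := by
  set p := layerCard P k
  set q := layerCard P (k + 1)
  obtain ⟨f, hf_inj, hf⟩ := exists_injective_layerCopies h k
  let e := Equiv.ofBijective f <| (Fintype.bijective_iff_injective_and_card f).2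
    ⟨hf_inj, by rw [LayerCopies.card, LayerCopies.card, mul_comm]⟩
  let c : P → P → ℕ := fun x y => #{a | a.1.1 = x ∧ (f a).1.1 = y}
  have hrow : ∀ x, rk x = k → ∑ y, c x y = q := fun x hx => by
    rw [← LayerCopies.card_filter_val_fst_eq (n := q) hx,
      card_eq_sum_card_fiberwise (f := fun a => (f a).1.1) (t := univ) fun _ _ => mem_univ _]
    simp only [c, filter_filter]
  have hcol : ∀ y, rk y = k + 1 → ∑ x, c x y = p := fun y hy => by
    rw [← LayerCopies.card_filter_val_fst_eq (n := p) hy,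
      ← card_equiv e (s := {a | (f a).1.1 = y}) (t := {b | b.1.1 = y}) (by simp [e]),
      card_eq_sum_card_fiberwise (f := fun a => a.1.1) (t := univ) fun _ _ => mem_univ _]
    simp only [c, filter_filter, and_comm]
  refine ⟨fun x y => c x y / q, fun x y => by positivity, fun {x y} hxy => ?_, fun x hx => ?_,
    fun y hy => ?_⟩
  · obtain ⟨a, ha⟩ := card_ne_zero.1 (by exact_mod_cast (div_ne_zero_iff.1 hxy).1 : c x y ≠ 0)
    obtain ⟨rfl, rfl⟩ := (mem_filter.1 ha).2
    exact ⟨a.1.2, hf a, (f a).1.2⟩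
  · rw [← sum_div, ← Nat.cast_sum, hrow x hx, div_self (by positivity)]
  · rw [← sum_div, ← Nat.cast_sum, hcol y hy]

end LayerTransition

section PathWeight

variable {α : Type*}

lemma Fintype.sum_eq_sum_snoc [Fintype α] {M : Type*} [AddCommMonoid M] {n : ℕ}
    (F : (Fin (n + 1) → α) → M) :
    ∑ f, F f = ∑ g : Fin n → α, ∑ y, F (Fin.snoc g y) := by
  rw [← (Fin.snocEquiv fun _ => α).sum_comp, Fintype.sum_prod_type, sum_comm]
  rfl

def pathWeight (π : α → ℝ) (T : ℕ → α → α → ℝ) (n : ℕ) (f : Fin (n + 1) → α) : ℝ :=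
  π (f 0) * ∏ i : Fin n, T i (f i.castSucc) (f i.succ)

variable {π : α → ℝ} {T : ℕ → α → α → ℝ} {n : ℕ}

lemma pathWeight_ne_zero_iff {f : Fin (n + 1) → α} :
    pathWeight π T n f ≠ 0 ↔ π (f 0) ≠ 0 ∧ ∀ i : Fin n, T i (f i.castSucc) (f i.succ) ≠ 0 := by
  simp [pathWeight, prod_ne_zero_iff]

lemma pathWeight_nonneg (hπ : ∀ x, 0 ≤ π x) (hT : ∀ k < n, ∀ x y, 0 ≤ T k x y)
    (f : Fin (n + 1) → α) : 0 ≤ pathWeight π T n f :=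
  mul_nonneg (hπ _) (prod_nonneg fun i _ => hT i i.isLt _ _)

lemma pathWeight_snoc (g : Fin (n + 1) → α) (y : α) :
    pathWeight π T (n + 1) (Fin.snoc g y) = pathWeight π T n g * T n (g (Fin.last n)) y := by
  simp_rw [pathWeight, Fin.prod_univ_castSucc, ← Fin.castSucc_succ, ← Fin.castSucc_zero,
    Fin.succ_last, Fin.snoc_castSucc, Fin.snoc_last, Fin.val_castSucc, Fin.val_last, mul_assoc]

variable [Fintype α] [DecidableEq α]

lemma sum_ite_last_pathWeight (y : α) :
    ∑ f : Fin (n + 2) → α, (if f (Fin.last (n + 1)) = y then pathWeight π T (n + 1) f else 0) =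
      ∑ x, (∑ g : Fin (n + 1) → α, if g (Fin.last n) = x then pathWeight π T n g else 0) *
        T n x y := by
  simp_rw [Fintype.sum_eq_sum_snoc (n := n + 1), pathWeight_snoc, Fin.snoc_last, sum_ite_eq',
    mem_univ, if_true, sum_mul, ite_mul, zero_mul]
  rw [sum_comm]
  simp

lemma sum_ite_castSucc_pathWeight
    (hT : ∀ g, pathWeight π T n g ≠ 0 → ∑ y, T n (g (Fin.last n)) y = 1) (j : Fin (n + 1))
    (x : α) :
    ∑ f : Fin (n + 2) → α, (if f j.castSucc = x then pathWeight π T (n + 1) f else 0) =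
      ∑ g : Fin (n + 1) → α, if g j = x then pathWeight π T n g else 0 := by
  rw [Fintype.sum_eq_sum_snoc]
  refine sum_congr rfl fun g _ => ?_
  simp_rw [Fin.snoc_castSucc, pathWeight_snoc]
  split_ifs
  · by_cases hg : pathWeight π T n g = 0
    · simp [hg]
    · rw [← mul_sum, hT g hg, mul_one]
  · simp

end PathWeight

section GradedPath

variable {P : Type*} [PartialOrder P]

noncomputable def layerUniform (k : ℕ) (x : P) : ℝ := if rk x = k then 1 / layerCard P k else 0

lemma layerUniform_nonneg (k : ℕ) (x : P) : 0 ≤ layerUniform k x := by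
  unfold layerUniform
  split <;> positivity

variable [Fintype P]

lemma sum_layerUniform {k : ℕ} (hk : 0 < layerCard P k) : ∑ x : P, layerUniform k x = 1 := by
  simp only [layerUniform]
  rw [← sum_filter, sum_const, ← layerCard_eq_card_filter, nsmul_eq_mul, mul_one_div,
    div_self (by positivity)]

lemma IsLayerTransition.sum_layerUniform_mul {k : ℕ} {T : P → P → ℝ} (hT : IsLayerTransition k T)
    (y : P) : ∑ x, layerUniform k x * T x y = layerUniform (k + 1) y := by
  by_cases hy : rk y = k + 1
  · obtain ⟨x₀, -, hx₀⟩ := exists_lt_rk_eq_of_rk_eq_add_one hy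
    have hp : (0 : ℝ) < layerCard P k := by exact_mod_cast layerCard_pos_of_le_rk hx₀.ge
    have hterm : ∀ x, layerUniform k x * T x y = T x y / layerCard P k := fun x => by
      by_cases hTxy : T x y = 0
      · simp [hTxy]
      · simp [layerUniform, (hT.rel_of_ne_zero hTxy).1, div_eq_inv_mul]
    rw [sum_congr rfl fun x _ => hterm x, ← sum_div, hT.sum_col y hy, layerUniform, if_pos hy]
    field_simp
  · have hzero : ∀ x, T x y = 0 := fun x => by_contra fun h => hy (hT.rel_of_ne_zero h).2.2
    simp [layerUniform, hy, hzero]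

variable {T : ℕ → P → P → ℝ} {n : ℕ}

lemma rk_apply_of_pathWeight_ne_zero (hT : ∀ k < n, IsLayerTransition k (T k))
    {f : Fin (n + 1) → P} (hf : pathWeight (layerUniform 0) T n f ≠ 0) (i : Fin (n + 1)) :
    rk (f i) = i := by
  obtain ⟨h0, hsucc⟩ := pathWeight_ne_zero_iff.1 hf
  cases i using Fin.cases with
  | zero => exact by_contra fun h => h0 (if_neg h)
  | succ i => exact ((hT i i.isLt).rel_of_ne_zero (hsucc i)).2.2

lemma strictMono_of_pathWeight_ne_zero (hT : ∀ k < n, IsLayerTransition k (T k))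
    {f : Fin (n + 1) → P} (hf : pathWeight (layerUniform 0) T n f ≠ 0) : StrictMono f :=
  Fin.strictMono_iff_lt_succ.2 fun i =>
    ((hT i i.isLt).rel_of_ne_zero ((pathWeight_ne_zero_iff.1 hf).2 i)).2.1

variable [DecidableEq P]

theorem sum_ite_pathWeight_layerUniform (hT : ∀ k < n, IsLayerTransition k (T k))
    (j : Fin (n + 1)) (x : P) :
    ∑ f, (if f j = x then pathWeight (layerUniform 0) T n f else 0) = layerUniform j x := by
  induction n generalizing x with
  | zero =>
    rw [Fin.fin_one_eq_zero j, ← (Equiv.funUnique (Fin 1) P).symm.sum_comp]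
    simp [pathWeight]
  | succ n ih =>
    have hT' : ∀ k < n, IsLayerTransition k (T k) := fun k hk => hT k (hk.trans n.lt_succ_self)
    have hTn := hT n n.lt_succ_self
    cases j using Fin.lastCases with
    | last =>
      simp_rw [sum_ite_last_pathWeight, ih hT', Fin.val_last]
      exact hTn.sum_layerUniform_mul x
    | cast j =>
      rw [sum_ite_castSucc_pathWeight (fun g hg => hTn.sum_row _
        (rk_apply_of_pathWeight_ne_zero hT' hg (Fin.last n))) j x, ih hT' j, Fin.val_castSucc]

end GradedPath

section ChainWeight

variable {P ι : Type*} [Fintype P] [DecidableEq P] [Fintype ι] [DecidableEq ι]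

def chainWeight (μ : (ι → P) → ℝ) (C : Finset P) : ℝ := ∑ f with univ.image f = C, μ f

lemma sum_chainWeight (μ : (ι → P) → ℝ) : ∑ C, chainWeight μ C = ∑ f, μ f :=
  sum_fiberwise univ _ μ

lemma sum_ite_mem_chainWeight (μ : (ι → P) → ℝ) (x : P) :
    ∑ C, (if x ∈ C then chainWeight μ C else 0) = ∑ f, if x ∈ univ.image f then μ f else 0 := by
  rw [← sum_fiberwise univ (fun f => univ.image f)]
  refine sum_congr rfl fun C _ => ?_
  rw [chainWeight]
  split_ifs with hx
  · exact sum_congr rfl fun f hf => by rw [(mem_filter.1 hf).2, if_pos hx]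
  · exact (sum_eq_zero fun f hf => by rw [(mem_filter.1 hf).2, if_neg hx]).symm

variable [PartialOrder P]

theorem isUnitFlow_chainWeight [Nonempty P] {m : ℕ} (hm : ∀ x : P, rk x ≤ m)
    {μ : (Fin (m + 1) → P) → ℝ} (hμ0 : ∀ f, 0 ≤ μ f)
    (hμ : ∀ f, μ f ≠ 0 → StrictMono f ∧ ∀ i, rk (f i) = i)
    (hmarg : ∀ j x, ∑ f, (if f j = x then μ f else 0) = layerUniform j x) :
    IsUnitFlow (chainWeight μ) := by
  refine ⟨fun C => sum_nonneg fun f _ => hμ0 f, fun C hC => ?_, ?_, fun x => ?_⟩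
  · by_contra hne
    rw [chainWeight] at hne
    obtain ⟨f, hf, hμf⟩ := exists_ne_zero_of_sum_ne_zero hne
    rw [← (mem_filter.1 hf).2, coe_image, coe_univ, Set.image_univ] at hC
    exact hC (hμ f hμf).1.monotone.isChain_range
  · calc ∑ C, chainWeight μ C = ∑ f, μ f := sum_chainWeight μ
      _ = ∑ x, ∑ f, if f 0 = x then μ f else 0 := by rw [sum_comm]; simp
      _ = 1 := by
        simp_rw [hmarg, Fin.val_zero]
        exact sum_layerUniform (layerCard_pos_of_le_rk (Nat.zero_le (rk (Classical.arbitrary P))))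
  · have hx : rk x < m + 1 := (hm x).trans_lt m.lt_succ_self
    have hmem : ∀ f, μ f ≠ 0 → (x ∈ univ.image f ↔ f ⟨rk x, hx⟩ = x) := fun f hμf =>
      ⟨fun h => by
        obtain ⟨i, -, rfl⟩ := mem_image.1 h
        rw [show (⟨rk (f i), hx⟩ : Fin (m + 1)) = i from Fin.ext ((hμ f hμf).2 i)],
        fun h => mem_image.2 ⟨_, mem_univ _, h⟩⟩
    rw [sum_ite_mem_chainWeight]
    calc ∑ f, (if x ∈ univ.image f then μ f else 0)
        = ∑ f, (if f ⟨rk x, hx⟩ = x then μ f else 0) := sum_congr rfl fun f _ => by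
          by_cases hμf : μ f = 0
          · simp [hμf]
          · simp only [hmem f hμf]
      _ = 1 / layerCard P (rk x) := by rw [hmarg]; simp [layerUniform]

end ChainWeight

lemma isUnitFlow_of_isEmpty {P : Type*} [Fintype P] [PartialOrder P] [DecidableEq P] [IsEmpty P] :
    IsUnitFlow (P := P) fun C => if C = ∅ then 1 else 0 := by
  refine ⟨fun C => by dsimp only; split <;> norm_num, fun C hC => ?_,
    by rw [Fintype.sum_eq_single ∅ fun C hC => if_neg hC, if_pos rfl], isEmptyElim⟩
  rw [C.eq_empty_of_isEmpty, coe_empty] at hC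
  exact absurd IsChain.empty hC

/-- **Kleitman's criterion.** If the LYM inequality holds for all antichains contained
in two consecutive layers of a finite poset `P`, then `P` admits a unit flow. -/
theorem exists_unitFlow_of_consecutive_LYM {P : Type*}
    [Fintype P] [PartialOrder P] [DecidableEq P]
    (h : ∀ (k : ℕ) (A : Finset P), (∀ x ∈ A, rk x = k ∨ rk x = k + 1) →
      IsAntichain (· ≤ ·) (A : Set P) →
      ∑ x ∈ A, (1 : ℝ) / layerCard P (rk x) ≤ 1) :
    ∃ w : Finset P → ℝ, IsUnitFlow w := by
  cases isEmpty_or_nonempty P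
  · exact ⟨_, isUnitFlow_of_isEmpty⟩
  obtain ⟨top, -, htop⟩ := exists_mem_eq_sup univ univ_nonempty (rk : P → ℕ)
  have hm : ∀ x : P, rk x ≤ rk top := fun x => htop ▸ le_sup (mem_univ x)
  have hT : ∀ k < rk top, ∃ T, IsLayerTransition k T := fun k hk =>
    exists_isLayerTransition h (layerCard_pos_of_le_rk hk)
  choose! T hT using hT
  exact ⟨_, isUnitFlow_chainWeight hm
    (pathWeight_nonneg (layerUniform_nonneg 0) fun k hk => (hT k hk).nonneg)
    (fun f hf => ⟨strictMono_of_pathWeight_ne_zero hT hf, rk_apply_of_pathWeight_ne_zero hT hf⟩)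
    (sum_ite_pathWeight_layerUniform hT)⟩
end

section
/- Let P be a finite poset admitting a unit flow, i.e., a probability distribution w on the set of chains of P such that for every x ∈ P the total w-weight of chains containing x equals 1/|P_{r(x)}|. Then P is a LYM poset: every antichain A ⊆ P satisfies ∑_{x∈A} 1/|P_{r(x)}| ≤ 1. -/
/-- A finite poset admitting a unit flow is a LYM poset. -/
theorem isLYM_of_unitFlow {P : Type*} [Fintype P] [PartialOrder P] [DecidableEq P]
    (w : Finset P → ℝ) (hw : IsUnitFlow w) :
    IsLYM P := by
  obtain ⟨hpos, hchain, hsum, hx⟩ := hw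
  intro A hA
  calc ∑ x ∈ A, (1 : ℝ) / layerCard P (rk x)
      = ∑ x ∈ A, ∑ C : Finset P, (if x ∈ C then w C else 0) := by
        simp_rw [hx]
    _ = ∑ C : Finset P, ∑ x ∈ A, (if x ∈ C then w C else 0) := Finset.sum_comm
    _ ≤ ∑ C : Finset P, w C := by
        apply Finset.sum_le_sum
        intro C _
        by_cases hC : IsChain (· ≤ ·) (C : Set P)
        · have hcard : (A ∩ C).card ≤ 1 := by
            rw [Finset.card_le_one]
            intro a ha b hb
            simp only [Finset.mem_inter] at ha hb
            by_contra hne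
            rcases hC ha.2 hb.2 hne with h | h
            · exact hA ha.1 hb.1 hne h
            · exact hA hb.1 ha.1 (Ne.symm hne) h
          have : ∑ x ∈ A, (if x ∈ C then w C else 0) = (A ∩ C).card * w C := by
            rw [← Finset.sum_filter, Finset.sum_const, nsmul_eq_mul]
            congr 1
          rw [this]
          calc ((A ∩ C).card : ℝ) * w C ≤ 1 * w C := by
                apply mul_le_mul_of_nonneg_right _ (hpos C)
                exact_mod_cast hcard
            _ = w C := one_mul _
        · simp [hchain C hC]
    _ = 1 := hsum
end

section
/- Let h, μ be nonnegative integers and let p, q : ℤ → ℝ be sequences with p_k > 0 for 0 ≤ k ≤ h and p_k = 0 otherwise, q_l > 0 for 0 ≤ l ≤ μ and q_l = 0 otherwise, and suppose p and q are log-concave on their supports: p_k² ≥ p_{k-1}p_{k+1} for 1 ≤ k ≤ h−1 and q_l² ≥ q_{l-1}q_{l+1} for 1 ≤ l ≤ μ−1. Then the convolution s_m = ∑_{i∈ℤ} p_{m-i} q_i is log-concave: s_m² ≥ s_{m-1}·s_{m+1} for all integers m. -/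
/-- A nonnegative sequence supported and log-concave on `[0,h]` satisfies
`x (a-1) * x (b+1) ≤ x a * x b` whenever `a ≤ b + 1`. -/
lemma logConcave_spread (h : ℕ) (x : ℤ → ℝ)
    (hx_pos : ∀ k : ℤ, 0 ≤ k → k ≤ (h : ℤ) → 0 < x k)
    (hx_zero : ∀ k : ℤ, (k < 0 ∨ (h : ℤ) < k) → x k = 0)
    (hx_lc : ∀ k : ℤ, 1 ≤ k → k ≤ (h : ℤ) - 1 → x (k - 1) * x (k + 1) ≤ x k ^ 2) :
    ∀ a b : ℤ, a ≤ b + 1 → x (a - 1) * x (b + 1) ≤ x a * x b := by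
  have hnn : ∀ k : ℤ, 0 ≤ x k := by
    intro k
    rcases lt_or_ge k 0 with hk | hk
    · exact (hx_zero k (Or.inl hk)).ge
    rcases le_or_gt k h with hk2 | hk2
    · exact (hx_pos k hk hk2).le
    · exact (hx_zero k (Or.inr hk2)).ge
  have main : ∀ d : ℕ, ∀ a : ℤ, 1 ≤ a → a + d ≤ (h : ℤ) - 1 →
      x (a - 1) * x (a + d + 1) ≤ x a * x (a + d) := by
    intro d
    induction d with
    | zero =>
      intro a h1 h2
      simpa [sq] using hx_lc a h1 (by simpa using h2)
    | succ n ih =>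
      intro a h1 h2
      have hcast : (↑(n + 1) : ℤ) = (n : ℤ) + 1 := by push_cast; ring
      rw [hcast] at h2 ⊢
      have h2' : a + n ≤ (h : ℤ) - 1 := by omega
      have ihn := ih a h1 h2'
      set b : ℤ := a + n with hb
      have hblc := hx_lc (b + 1) (by omega) (by omega)
      rw [show b + 1 - 1 = b by ring] at hblc
      have hxb : 0 < x b := hx_pos b (by omega) (by omega)
      have hxb1 : 0 < x (b + 1) := hx_pos (b + 1) (by omega) (by omega)
      have h3 : (x (a - 1) * x (b + 1)) * (x b * x (b + 1 + 1)) ≤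
          (x a * x b) * (x (b + 1) ^ 2) :=
        mul_le_mul ihn hblc (mul_nonneg (hnn _) (hnn _))
          (mul_nonneg (hnn _) (hnn _))
      have h4 : (x (a - 1) * x (b + 1 + 1)) * (x b * x (b + 1)) ≤
          (x a * x (b + 1)) * (x b * x (b + 1)) := by nlinarith [h3]
      have h5 : x (a - 1) * x (b + 1 + 1) ≤ x a * x (b + 1) :=
        le_of_mul_le_mul_right h4 (mul_pos hxb hxb1)
      calc x (a - 1) * x (a + ((n : ℤ) + 1) + 1)
          = x (a - 1) * x (b + 1 + 1) := by rw [show a + ((n : ℤ) + 1) + 1 = b + 1 + 1 by omega]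
        _ ≤ x a * x (b + 1) := h5
        _ = x a * x (a + ((n : ℤ) + 1)) := by rw [show a + ((n : ℤ) + 1) = b + 1 by omega]
  intro a b hab
  rcases eq_or_lt_of_le hab with heq | hlt
  · subst heq
    rw [show b + 1 - 1 = b by ring, mul_comm]
  · have hab' : a ≤ b := by omega
    by_cases hz1 : x (a - 1) = 0
    · rw [hz1, zero_mul]; exact mul_nonneg (hnn _) (hnn _)
    by_cases hz2 : x (b + 1) = 0
    · rw [hz2, mul_zero]; exact mul_nonneg (hnn _) (hnn _)
    have h1 : ¬(a - 1 < 0 ∨ (h : ℤ) < a - 1) := fun hc => hz1 (hx_zero _ hc)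
    have h2 : ¬(b + 1 < 0 ∨ (h : ℤ) < b + 1) := fun hc => hz2 (hx_zero _ hc)
    push_neg at h1 h2
    have hd : a + ((b - a).toNat : ℤ) = b := by omega
    have := main (b - a).toNat a (by omega) (by omega)
    rw [hd] at this
    exact this

/-- Symmetrization: a double sum is nonnegative if `F k l + F l k` is always nonnegative. -/
lemma double_sum_nonneg (T : Finset ℤ) (F : ℤ → ℤ → ℝ)
    (hF : ∀ k l : ℤ, 0 ≤ F k l + F l k) :
    0 ≤ ∑ k ∈ T, ∑ l ∈ T, F k l := by
  have h1 : 0 ≤ ∑ k ∈ T, ∑ l ∈ T, (F k l + F l k) :=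
    Finset.sum_nonneg fun k _ => Finset.sum_nonneg fun l _ => hF k l
  have h2 : ∑ k ∈ T, ∑ l ∈ T, (F k l + F l k) =
      (∑ k ∈ T, ∑ l ∈ T, F k l) + (∑ k ∈ T, ∑ l ∈ T, F l k) := by
    simp [Finset.sum_add_distrib]
  have h3 : ∑ k ∈ T, ∑ l ∈ T, F l k = ∑ k ∈ T, ∑ l ∈ T, F k l := Finset.sum_comm
  rw [h2, h3] at h1
  linarith

/-- If `p` and `q` are sequences that are positive exactly on `[0, h]` and `[0, μ]`
respectively and are log-concave on their supports, then their convolution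
`s_m = ∑_{i ∈ ℤ} p_{m-i} q_i` is log-concave: `s_m ^ 2 ≥ s_{m-1} * s_{m+1}`. -/
theorem convolution_logConcave (h μ : ℕ) (p q : ℤ → ℝ)
    (hp_pos : ∀ k : ℤ, 0 ≤ k → k ≤ (h : ℤ) → 0 < p k)
    (hp_zero : ∀ k : ℤ, (k < 0 ∨ (h : ℤ) < k) → p k = 0)
    (hq_pos : ∀ l : ℤ, 0 ≤ l → l ≤ (μ : ℤ) → 0 < q l)
    (hq_zero : ∀ l : ℤ, (l < 0 ∨ (μ : ℤ) < l) → q l = 0)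
    (hp_lc : ∀ k : ℤ, 1 ≤ k → k ≤ (h : ℤ) - 1 → p (k - 1) * p (k + 1) ≤ p k ^ 2)
    (hq_lc : ∀ l : ℤ, 1 ≤ l → l ≤ (μ : ℤ) - 1 → q (l - 1) * q (l + 1) ≤ q l ^ 2) :
    ∀ m : ℤ, (∑ᶠ i : ℤ, p (m - 1 - i) * q i) * (∑ᶠ i : ℤ, p (m + 1 - i) * q i) ≤
      (∑ᶠ i : ℤ, p (m - i) * q i) ^ 2 := by
  intro m
  set T : Finset ℤ := Finset.Icc (-1 : ℤ) ((μ : ℤ) + 1) with hT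
  -- finsums reduce to sums over T
  have key_sum : ∀ c : ℤ, ∑ᶠ i : ℤ, p (c - i) * q i = ∑ i ∈ T, p (c - i) * q i := by
    intro c
    apply finsum_eq_finset_sum_of_support_subset
    intro i hi
    simp only [Function.mem_support] at hi
    have hq : q i ≠ 0 := fun h0 => hi (by rw [h0, mul_zero])
    have h1 : 0 ≤ i := by
      by_contra h'
      exact hq (hq_zero i (Or.inl (by omega)))
    have h2 : i ≤ (μ : ℤ) := by
      by_contra h'
      exact hq (hq_zero i (Or.inr (by omega)))
    simp only [hT, Finset.coe_Icc, Set.mem_Icc]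
    omega
  -- extending/shrinking sums: only `Icc 0 μ` matters
  have sum_ext : ∀ (f : ℤ → ℝ) (S : Finset ℤ), Finset.Icc (0 : ℤ) (μ : ℤ) ⊆ S →
      ∑ i ∈ S, f i * q i = ∑ i ∈ Finset.Icc (0 : ℤ) (μ : ℤ), f i * q i := by
    intro f S hS
    refine (Finset.sum_subset hS ?_).symm
    intro i _ hi2
    simp only [Finset.mem_Icc] at hi2
    rw [hq_zero i (by omega), mul_zero]
  have hTsub : Finset.Icc (0 : ℤ) (μ : ℤ) ⊆ T := by
    intro i hi; simp only [Finset.mem_Icc] at hi; simp only [hT, Finset.mem_Icc]; omega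
  have hT'sub : Finset.Icc (0 : ℤ) (μ : ℤ) ⊆ Finset.Icc (0 : ℤ) ((μ : ℤ) + 2) := by
    intro i hi; simp only [Finset.mem_Icc] at hi ⊢; omega
  -- shifted representations
  have shift : ∀ c : ℤ, ∑ i ∈ T, p (c - i) * q i = ∑ j ∈ T, p (c - 1 - j) * q (j + 1) := by
    intro c
    rw [sum_ext (fun i => p (c - i)) T hTsub,
      ← sum_ext (fun i => p (c - i)) (Finset.Icc (0 : ℤ) ((μ : ℤ) + 2)) hT'sub]
    refine Finset.sum_nbij' (fun a => a - 1) (fun a => a + 1) ?_ ?_ ?_ ?_ ?_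
    · intro a ha; simp only [Finset.mem_Icc] at ha; simp only [hT, Finset.mem_Icc]; omega
    · intro a ha; simp only [hT, Finset.mem_Icc] at ha; simp only [Finset.mem_Icc]; omega
    · intro a _; ring
    · intro a _; ring
    · intro a _
      rw [show c - 1 - (a - 1) = c - a by ring, show a - 1 + 1 = a by ring]
  have shiftB := shift m
  have shiftC : ∑ i ∈ T, p (m + 1 - i) * q i = ∑ j ∈ T, p (m - j) * q (j + 1) := by
    have := shift (m + 1)
    simpa [show m + 1 - 1 = m by ring] using this
  rw [key_sum (m - 1), key_sum (m + 1), key_sum m]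
  -- expand both sides as double sums
  have expandAC : (∑ i ∈ T, p (m - 1 - i) * q i) * (∑ i ∈ T, p (m + 1 - i) * q i) =
      ∑ k ∈ T, ∑ l ∈ T, p (m - 1 - k) * q k * (p (m - l) * q (l + 1)) := by
    rw [shiftC, Finset.sum_mul_sum]
  have expandB : (∑ i ∈ T, p (m - i) * q i) ^ 2 =
      ∑ k ∈ T, ∑ l ∈ T, p (m - 1 - k) * q (k + 1) * (p (m - l) * q l) := by
    rw [sq]
    nth_rewrite 1 [shiftB]
    rw [Finset.sum_mul_sum]
  rw [expandAC, expandB, ← sub_nonneg]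
  have hcomb : ∑ k ∈ T, ∑ l ∈ T, p (m - 1 - k) * q (k + 1) * (p (m - l) * q l) -
      ∑ k ∈ T, ∑ l ∈ T, p (m - 1 - k) * q k * (p (m - l) * q (l + 1)) =
      ∑ k ∈ T, ∑ l ∈ T, (p (m - 1 - k) * q (k + 1) * (p (m - l) * q l) -
        p (m - 1 - k) * q k * (p (m - l) * q (l + 1))) := by
    rw [← Finset.sum_sub_distrib]
    exact Finset.sum_congr rfl fun k _ => by rw [← Finset.sum_sub_distrib]
  rw [hcomb]
  apply double_sum_nonneg
  -- key pointwise inequality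
  have keyp := logConcave_spread h p hp_pos hp_zero hp_lc
  have keyq := logConcave_spread μ q hq_pos hq_zero hq_lc
  have main : ∀ k l : ℤ, k ≤ l →
      0 ≤ (p (m - 1 - k) * q (k + 1) * (p (m - l) * q l) -
            p (m - 1 - k) * q k * (p (m - l) * q (l + 1))) +
          (p (m - 1 - l) * q (l + 1) * (p (m - k) * q k) -
            p (m - 1 - l) * q l * (p (m - k) * q (k + 1))) := by
    intro k l hkl
    have hq1 : q k * q (l + 1) ≤ q (k + 1) * q l := by
      have := keyq (k + 1) l (by omega)
      rwa [show k + 1 - 1 = k by ring] at this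
    have hp1 : p (m - 1 - l) * p (m - k) ≤ p (m - l) * p (m - 1 - k) := by
      have := keyp (m - l) (m - 1 - k) (by omega)
      rwa [show m - l - 1 = m - 1 - l by ring, show m - 1 - k + 1 = m - k by ring] at this
    have factored : (p (m - 1 - k) * q (k + 1) * (p (m - l) * q l) -
            p (m - 1 - k) * q k * (p (m - l) * q (l + 1))) +
          (p (m - 1 - l) * q (l + 1) * (p (m - k) * q k) -
            p (m - 1 - l) * q l * (p (m - k) * q (k + 1))) =
        (p (m - l) * p (m - 1 - k) - p (m - 1 - l) * p (m - k)) *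
          (q (k + 1) * q l - q k * q (l + 1)) := by ring
    rw [factored]
    exact mul_nonneg (by linarith) (by linarith)
  intro k l
  rcases le_total k l with hkl | hlk
  · exact main k l hkl
  · rw [add_comm]
    exact main l k hlk
end

section
/- Let h, μ be nonnegative integers and let p, q : ℤ → ℝ be sequences with p_k > 0 for 0 ≤ k ≤ h and p_k = 0 otherwise, q_l > 0 for 0 ≤ l ≤ μ and q_l = 0 otherwise, and suppose p and q are log-concave on their supports: p_k² ≥ p_{k-1}p_{k+1} for 1 ≤ k ≤ h−1 and q_l² ≥ q_{l-1}q_{l+1} for 1 ≤ l ≤ μ−1. Then for all integers k, l and every positive integer t: (∑_{i=0}^{t-1} p_{k-i} q_{l+i}) · (∑_{j∈ℤ} p_{k+1-j} q_{l+j}) ≤ (∑_{i=0}^{t} p_{k+1-i} q_{l+i}) · (∑_{j∈ℤ} p_{k-j} q_{l+j}). -/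
/-- Ratio monotonicity from log-concavity: `p x * p (y+1) ≤ p (x+1) * p y`
for `0 ≤ x ≤ y ≤ h - 1`. -/
lemma harper_ratio_mono (h : ℕ) (p : ℤ → ℝ)
    (hp_pos : ∀ k : ℤ, 0 ≤ k → k ≤ (h : ℤ) → 0 < p k)
    (hp_lc : ∀ k : ℤ, 1 ≤ k → k ≤ (h : ℤ) - 1 → p (k - 1) * p (k + 1) ≤ p k ^ 2)
    (x : ℤ) (hx : 0 ≤ x) :
    ∀ y : ℤ, x ≤ y → y ≤ (h : ℤ) - 1 → p x * p (y + 1) ≤ p (x + 1) * p y := by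
  have key : ∀ d : ℕ, ∀ y : ℤ, y = x + d → y ≤ (h : ℤ) - 1 →
      p x * p (y + 1) ≤ p (x + 1) * p y := by
    intro d
    induction d with
    | zero =>
      intro y hy _
      have : y = x := by omega
      subst this
      rw [mul_comm]
    | succ n ih =>
      intro y hy hy1
      have ihn : p x * p (y - 1 + 1) ≤ p (x + 1) * p (y - 1) := ih (y - 1) (by omega) (by omega)
      have e : y - 1 + 1 = y := by ring
      rw [e] at ihn
      have hlc := hp_lc y (by omega) hy1
      have hpy : 0 < p y := hp_pos y (by omega) (by omega)
      have hpy1 : 0 < p (y - 1) := hp_pos (y - 1) (by omega) (by omega)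
      have hpx : 0 ≤ p x := (hp_pos x hx (by omega)).le
      have hpx1 : 0 ≤ p (x + 1) := (hp_pos (x + 1) (by omega) (by omega)).le
      nlinarith [mul_le_mul_of_nonneg_left hlc hpx, mul_le_mul_of_nonneg_right ihn hpy.le,
        mul_nonneg hpx1 hpy1.le]
  intro y h1 h2
  exact key (y - x).toNat y (by omega) h2

/-- Summing a function of the integer cast over `range t` equals summing over `Icc 0 (t-1)`. -/
lemma harper_range_to_Icc (g : ℤ → ℝ) (t : ℕ) :
    ∑ i ∈ Finset.range t, g (i : ℤ) = ∑ j ∈ Finset.Icc (0 : ℤ) ((t : ℤ) - 1), g j := by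
  refine Finset.sum_nbij' (fun i => (i : ℤ)) (fun j => j.toNat) ?_ ?_ ?_ ?_ (fun a _ => rfl)
  · intro a ha; simp only [Finset.mem_range] at ha; simp only [Finset.mem_Icc]; omega
  · intro a ha; simp only [Finset.mem_Icc] at ha; simp only [Finset.mem_range]; omega
  · intro a _; simp
  · intro a ha; simp only [Finset.mem_Icc] at ha; simp; omega

/-- Sum comparison via an injection. -/
lemma harper_sum_le_sum_inj {α : Type*} [DecidableEq α] (s s' : Finset α) (f g : α → ℝ)
    (φ : α → α) (hmap : ∀ x ∈ s, φ x ∈ s') (hinj : ∀ x ∈ s, ∀ y ∈ s, φ x = φ y → x = y)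
    (hle : ∀ x ∈ s, f x ≤ g (φ x)) (hg : ∀ y ∈ s', 0 ≤ g y) :
    ∑ x ∈ s, f x ≤ ∑ y ∈ s', g y := by
  calc ∑ x ∈ s, f x ≤ ∑ x ∈ s, g (φ x) := Finset.sum_le_sum hle
    _ = ∑ y ∈ s.image φ, g y := (Finset.sum_image hinj).symm
    _ ≤ ∑ y ∈ s', g y := by
        refine Finset.sum_le_sum_of_subset_of_nonneg ?_ (fun y hy _ => hg y hy)
        intro y hy
        obtain ⟨x, hx, rfl⟩ := Finset.mem_image.mp hy
        exact hmap x hx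

/-- The key inequality in Harper's theorem: for sequences `p`, `q` positive exactly on
`[0, h]`, `[0, μ]` and log-concave on their supports, for all integers `k`, `l` and every
positive integer `t`,
`(∑_{i=0}^{t-1} p_{k-i} q_{l+i}) (∑_{j ∈ ℤ} p_{k+1-j} q_{l+j})
  ≤ (∑_{i=0}^{t} p_{k+1-i} q_{l+i}) (∑_{j ∈ ℤ} p_{k-j} q_{l+j})`. -/
theorem harper_key_inequality (h μ : ℕ) (p q : ℤ → ℝ)
    (hp_pos : ∀ k : ℤ, 0 ≤ k → k ≤ (h : ℤ) → 0 < p k)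
    (hp_zero : ∀ k : ℤ, (k < 0 ∨ (h : ℤ) < k) → p k = 0)
    (hq_pos : ∀ l : ℤ, 0 ≤ l → l ≤ (μ : ℤ) → 0 < q l)
    (hq_zero : ∀ l : ℤ, (l < 0 ∨ (μ : ℤ) < l) → q l = 0)
    (hp_lc : ∀ k : ℤ, 1 ≤ k → k ≤ (h : ℤ) - 1 → p (k - 1) * p (k + 1) ≤ p k ^ 2)
    (hq_lc : ∀ l : ℤ, 1 ≤ l → l ≤ (μ : ℤ) - 1 → q (l - 1) * q (l + 1) ≤ q l ^ 2)
    (k l : ℤ) (t : ℕ) (ht : 0 < t) :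
    (∑ i ∈ Finset.range t, p (k - (i : ℤ)) * q (l + (i : ℤ))) *
        (∑ᶠ j : ℤ, p (k + 1 - j) * q (l + j)) ≤
      (∑ i ∈ Finset.range (t + 1), p (k + 1 - (i : ℤ)) * q (l + (i : ℤ))) *
        (∑ᶠ j : ℤ, p (k - j) * q (l + j)) := by
  -- nonnegativity and support facts
  have hp0 : ∀ m : ℤ, 0 ≤ p m := by
    intro m
    by_cases hm : m < 0 ∨ (h : ℤ) < m
    · exact (hp_zero m hm).ge
    · push_neg at hm; exact (hp_pos m hm.1 hm.2).le
  have hq0 : ∀ m : ℤ, 0 ≤ q m := by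
    intro m
    by_cases hm : m < 0 ∨ (μ : ℤ) < m
    · exact (hq_zero m hm).ge
    · push_neg at hm; exact (hq_pos m hm.1 hm.2).le
  have hpsupp : ∀ m : ℤ, p m ≠ 0 → 0 ≤ m ∧ m ≤ (h : ℤ) := by
    intro m hm
    by_contra hc
    exact hm (hp_zero m (by omega))
  have hqsupp : ∀ m : ℤ, q m ≠ 0 → 0 ≤ m ∧ m ≤ (μ : ℤ) := by
    intro m hm
    by_contra hc
    exact hm (hq_zero m (by omega))
  set a : ℤ → ℝ := fun j => p (k - j) * q (l + j) with ha
  set b : ℤ → ℝ := fun j => p (k + 1 - j) * q (l + j) with hb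
  have ha0 : ∀ j, 0 ≤ a j := fun j => mul_nonneg (hp0 _) (hq0 _)
  have hb0 : ∀ j, 0 ≤ b j := fun j => mul_nonneg (hp0 _) (hq0 _)
  set T : Finset ℤ := Finset.Icc (min (-l) 0) (max ((μ : ℤ) - l) (t : ℤ)) with hT
  have hsub : ∀ f : ℤ → ℝ, (∀ j, f j ≠ 0 → q (l + j) ≠ 0) →
      (Function.support f) ⊆ (T : Set ℤ) := by
    intro f hf j hj
    have hq := hqsupp _ (hf j hj)
    simp only [hT, Finset.coe_Icc, Set.mem_Icc]
    omega
  have hSb : (∑ᶠ j : ℤ, p (k + 1 - j) * q (l + j)) = ∑ j ∈ T, b j := by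
    refine finsum_eq_sum_of_support_subset _ (hsub b ?_)
    intro j hj hq'
    exact hj (by simp [hb, hq'])
  have hSa : (∑ᶠ j : ℤ, p (k - j) * q (l + j)) = ∑ j ∈ T, a j := by
    refine finsum_eq_sum_of_support_subset _ (hsub a ?_)
    intro j hj hq'
    exact hj (by simp [ha, hq'])
  have hA : (∑ i ∈ Finset.range t, p (k - (i : ℤ)) * q (l + (i : ℤ)))
      = ∑ i ∈ Finset.Icc (0 : ℤ) ((t : ℤ) - 1), a i := harper_range_to_Icc a t
  have hB : (∑ i ∈ Finset.range (t + 1), p (k + 1 - (i : ℤ)) * q (l + (i : ℤ)))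
      = ∑ i ∈ Finset.Icc (0 : ℤ) ((t : ℤ)), b i := by
    have := harper_range_to_Icc b (t + 1)
    rw [this]
    norm_num
  rw [hSa, hSb, hA, hB]
  rw [Finset.sum_mul_sum, Finset.sum_mul_sum, ← Finset.sum_product', ← Finset.sum_product']
  set I : Finset ℤ := Finset.Icc (0 : ℤ) ((t : ℤ) - 1) with hI
  set I' : Finset ℤ := Finset.Icc (0 : ℤ) ((t : ℤ)) with hI'
  refine harper_sum_le_sum_inj (I ×ˢ T) (I' ×ˢ T) _ _
    (fun x => if x.2 < 0 then x else if x.2 ≤ (t : ℤ) then (x.2, x.1) else (x.1 + 1, x.2 - 1))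
    ?_ ?_ ?_ ?_
  · -- maps into I' ×ˢ T
    rintro ⟨i, j⟩ hx
    simp only [Finset.mem_product, hI, hI', hT, Finset.mem_Icc] at hx ⊢
    split_ifs with h1 h2 <;> simp only [Finset.mem_product, hI', hT, Finset.mem_Icc] <;> omega
  · -- injective
    rintro ⟨i, j⟩ hx ⟨i', j'⟩ hy heq
    simp only [Finset.mem_product, hI, hT, Finset.mem_Icc] at hx hy
    simp only at heq
    split_ifs at heq <;> simp only [Prod.mk.injEq, Prod.ext_iff] at heq ⊢ <;> omega
  · -- termwise inequality
    rintro ⟨i, j⟩ hx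
    simp only [Finset.mem_product, hI, hT, Finset.mem_Icc] at hx
    simp only
    split_ifs with h1 h2
    · -- j < 0 : a i * b j ≤ b i * a j
      simp only [ha, hb]
      by_cases hz : p (k - i) * q (l + i) * (p (k + 1 - j) * q (l + j)) = 0
      · rw [hz]
        exact mul_nonneg (hb0 i) (ha0 j)
      · have h1' : p (k - i) ≠ 0 := fun e => hz (by rw [e]; ring)
        have h2' : q (l + i) ≠ 0 := fun e => hz (by rw [e]; ring)
        have h3' : p (k + 1 - j) ≠ 0 := fun e => hz (by rw [e]; ring)
        have h4' : q (l + j) ≠ 0 := fun e => hz (by rw [e]; ring)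
        have hs1 := hpsupp _ h1'
        have hs3 := hpsupp _ h3'
        have key : p (k - i) * p (k + 1 - j) ≤ p (k - i + 1) * p (k - j) := by
          have := harper_ratio_mono h p hp_pos hp_lc (k - i) (by omega) (k - j)
            (by omega) (by omega)
          calc p (k - i) * p (k + 1 - j) = p (k - i) * p (k - j + 1) := by ring_nf
            _ ≤ p (k - i + 1) * p (k - j) := this
        have hqq : 0 ≤ q (l + i) * q (l + j) := mul_nonneg (hq0 _) (hq0 _)
        have := mul_le_mul_of_nonneg_right key hqq
        have hrw : p (k - i + 1) = p (k + 1 - i) := by ring_nf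
        rw [hrw] at this
        linarith [this]
    · -- 0 ≤ j ≤ t : swap, equality
      simp only [ha, hb]
      ring_nf
      exact le_refl _
    · -- j > t : a i * b j ≤ b (i+1) * a (j-1)
      simp only [ha, hb]
      have e1 : k + 1 - (i + 1) = k - i := by ring
      have e2 : k - (j - 1) = k + 1 - j := by ring
      have e3 : l + (i + 1) = l + i + 1 := by ring
      have e4 : l + (j - 1) = l + j - 1 := by ring
      rw [e1, e2, e3, e4]
      by_cases hz : q (l + i) * q (l + j) = 0
      · have hL : p (k - i) * q (l + i) * (p (k + 1 - j) * q (l + j)) = 0 := by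
          rcases mul_eq_zero.mp hz with e | e <;> rw [e] <;> ring
        rw [hL]
        exact mul_nonneg (mul_nonneg (hp0 _) (hq0 _)) (mul_nonneg (hp0 _) (hq0 _))
      · have h2' : q (l + i) ≠ 0 := fun e => hz (by rw [e]; ring)
        have h4' : q (l + j) ≠ 0 := fun e => hz (by rw [e]; ring)
        have hs2 := hqsupp _ h2'
        have hs4 := hqsupp _ h4'
        have key : q (l + i) * q (l + j - 1 + 1) ≤ q (l + i + 1) * q (l + j - 1) :=
          harper_ratio_mono μ q hq_pos hq_lc (l + i) (by omega) (l + j - 1)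
            (by omega) (by omega)
        have e5 : l + j - 1 + 1 = l + j := by ring
        rw [e5] at key
        have hpp : 0 ≤ p (k - i) * p (k + 1 - j) := mul_nonneg (hp0 _) (hp0 _)
        have hmul := mul_le_mul_of_nonneg_left key hpp
        linarith [hmul]
  · -- nonnegativity on target
    rintro ⟨i, j⟩ _
    exact mul_nonneg (hb0 i) (ha0 j)
end

section
/- Let p, q, ρ be nonnegative integers and define b_{i,j} = C(p,i)·C(q,j) if 0 ≤ i ≤ p, 0 ≤ j ≤ q and i + j ≤ ρ, and b_{i,j} = 0 otherwise (for integers i, j). Then for all integers i, j and every positive integer t: (∑_{l=0}^{t-1} b_{i-l, j-l}) · (∑_{l∈ℤ} b_{i-l, j+1-l}) ≤ (∑_{l=0}^{t} b_{i-l, j+1-l}) · (∑_{l∈ℤ} b_{i-l, j-l}). -/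
/-- `bcoef p q ρ i j = C(p,i) * C(q,j)` if `0 ≤ i ≤ p`, `0 ≤ j ≤ q` and `i + j ≤ ρ`,
and `0` otherwise; this is the size of the block `B_{i,j}` of the Hamming ball
`B_ρ[p,q]`. -/
def bcoef (p q ρ : ℕ) (i j : ℤ) : ℕ :=
  if 0 ≤ i ∧ i ≤ (p : ℤ) ∧ 0 ≤ j ∧ j ≤ (q : ℤ) ∧ i + j ≤ (ρ : ℤ) then
    p.choose i.toNat * q.choose j.toNat
  else 0

-- log-concavity cross inequality for binomial coefficients
lemma choose_cross (n a c : ℕ) (h : c < a) :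
    n.choose a * n.choose c ≤ n.choose (a - 1) * n.choose (c + 1) := by
  rcases Nat.lt_or_ge n a with hn | hn
  · simp [Nat.choose_eq_zero_of_lt hn]
  · have ha : 1 ≤ a := by omega
    have h1 : n.choose a * a = n.choose (a - 1) * (n + 1 - a) := by
      have := Nat.choose_succ_right_eq n (a - 1)
      have e1 : a - 1 + 1 = a := by omega
      have e2 : n - (a - 1) = n + 1 - a := by omega
      rw [e1, e2] at this
      exact this
    have h2 : n.choose (c + 1) * (c + 1) = n.choose c * (n - c) := Nat.choose_succ_right_eq n c
    have key : (n + 1 - a) * (c + 1) ≤ (n - c) * a :=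
      Nat.mul_le_mul (by omega) (by omega)
    have hpos : 0 < a * (c + 1) := by positivity
    refine Nat.le_of_mul_le_mul_right ?_ hpos
    calc n.choose a * n.choose c * (a * (c + 1))
        = (n.choose a * a) * (n.choose c * (c + 1)) := by ring
      _ = (n.choose (a - 1) * (n + 1 - a)) * (n.choose c * (c + 1)) := by rw [h1]
      _ = (n.choose (a - 1) * n.choose c) * ((n + 1 - a) * (c + 1)) := by ring
      _ ≤ (n.choose (a - 1) * n.choose c) * ((n - c) * a) := Nat.mul_le_mul_left _ key
      _ = (n.choose (a - 1)) * (n.choose c * (n - c)) * a := by ring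
      _ = (n.choose (a - 1)) * (n.choose (c + 1) * (c + 1)) * a := by rw [h2]
      _ = n.choose (a - 1) * n.choose (c + 1) * (a * (c + 1)) := by ring

lemma bcoef_ne_zero {p q ρ : ℕ} {a b : ℤ} (h : bcoef p q ρ a b ≠ 0) :
    0 ≤ a ∧ a ≤ (p : ℤ) ∧ 0 ≤ b ∧ b ≤ (q : ℤ) ∧ a + b ≤ (ρ : ℤ) := by
  unfold bcoef at h
  split_ifs at h with hc
  · exact hc
  · exact absurd rfl h

lemma factX (p q ρ : ℕ) (i j u v : ℤ) (huv : v ≤ u) :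
    bcoef p q ρ (i - u) (j - u) * bcoef p q ρ (i - v) (j + 1 - v) ≤
      bcoef p q ρ (i - u) (j + 1 - u) * bcoef p q ρ (i - v) (j - v) := by
  by_cases h1 : bcoef p q ρ (i - u) (j - u) = 0
  · simp [h1]
  by_cases h2 : bcoef p q ρ (i - v) (j + 1 - v) = 0
  · simp [h2]
  obtain ⟨a1, a2, a3, a4, a5⟩ := bcoef_ne_zero h1
  obtain ⟨b1, b2, b3, b4, b5⟩ := bcoef_ne_zero h2
  have c3 : (0:ℤ) ≤ i - u ∧ i - u ≤ p ∧ 0 ≤ j + 1 - u ∧ j + 1 - u ≤ q ∧ (i-u) + (j+1-u) ≤ ρ := by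
    omega
  have c4 : (0:ℤ) ≤ i - v ∧ i - v ≤ p ∧ 0 ≤ j - v ∧ j - v ≤ q ∧ (i-v) + (j-v) ≤ ρ := by
    omega
  unfold bcoef
  rw [if_pos ⟨a1, a2, a3, a4, a5⟩, if_pos ⟨b1, b2, b3, b4, b5⟩, if_pos c3, if_pos c4]
  have e1 : (j + 1 - u).toNat = (j - u).toNat + 1 := by omega
  have e2 : (j - v).toNat = (j + 1 - v).toNat - 1 := by omega
  have e3 : (j - u).toNat < (j + 1 - v).toNat := by omega
  rw [e1, e2]
  have key := choose_cross q ((j + 1 - v).toNat) ((j - u).toNat) e3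
  calc p.choose (i-u).toNat * q.choose (j-u).toNat *
        (p.choose (i-v).toNat * q.choose (j+1-v).toNat)
      = (p.choose (i-u).toNat * p.choose (i-v).toNat) *
        (q.choose (j+1-v).toNat * q.choose (j-u).toNat) := by ring
    _ ≤ (p.choose (i-u).toNat * p.choose (i-v).toNat) *
        (q.choose ((j+1-v).toNat - 1) * q.choose ((j-u).toNat + 1)) :=
          Nat.mul_le_mul_left _ key
    _ = p.choose (i-u).toNat * q.choose ((j-u).toNat + 1) *
        (p.choose (i-v).toNat * q.choose ((j+1-v).toNat - 1)) := by ring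

lemma factY (p q ρ : ℕ) (i j u v : ℤ) (huv : u < v) :
    bcoef p q ρ (i - u) (j - u) * bcoef p q ρ (i - v) (j + 1 - v) ≤
      bcoef p q ρ (i - (u + 1)) (j + 1 - (u + 1)) * bcoef p q ρ (i - (v - 1)) (j - (v - 1)) := by
  by_cases h1 : bcoef p q ρ (i - u) (j - u) = 0
  · simp [h1]
  by_cases h2 : bcoef p q ρ (i - v) (j + 1 - v) = 0
  · simp [h2]
  obtain ⟨a1, a2, a3, a4, a5⟩ := bcoef_ne_zero h1
  obtain ⟨b1, b2, b3, b4, b5⟩ := bcoef_ne_zero h2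
  have c3 : (0:ℤ) ≤ i - (u+1) ∧ i - (u+1) ≤ p ∧ 0 ≤ j + 1 - (u+1) ∧ j + 1 - (u+1) ≤ q ∧
      (i-(u+1)) + (j+1-(u+1)) ≤ ρ := by omega
  have c4 : (0:ℤ) ≤ i - (v-1) ∧ i - (v-1) ≤ p ∧ 0 ≤ j - (v-1) ∧ j - (v-1) ≤ q ∧
      (i-(v-1)) + (j-(v-1)) ≤ ρ := by omega
  unfold bcoef
  rw [if_pos ⟨a1, a2, a3, a4, a5⟩, if_pos ⟨b1, b2, b3, b4, b5⟩, if_pos c3, if_pos c4]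
  have e0 : (j + 1 - (u+1)).toNat = (j - u).toNat := by omega
  have e05 : (j - (v-1)).toNat = (j + 1 - v).toNat := by omega
  have e1 : (i - (u+1)).toNat = (i - u).toNat - 1 := by omega
  have e2 : (i - (v-1)).toNat = (i - v).toNat + 1 := by omega
  have e3 : (i - v).toNat < (i - u).toNat := by omega
  rw [e0, e05, e1, e2]
  have key := choose_cross p ((i - u).toNat) ((i - v).toNat) e3
  calc p.choose (i-u).toNat * q.choose (j-u).toNat *
        (p.choose (i-v).toNat * q.choose (j+1-v).toNat)
      = (p.choose (i-u).toNat * p.choose (i-v).toNat) *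
        (q.choose (j-u).toNat * q.choose (j+1-v).toNat) := by ring
    _ ≤ (p.choose ((i-u).toNat - 1) * p.choose ((i-v).toNat + 1)) *
        (q.choose (j-u).toNat * q.choose (j+1-v).toNat) :=
          Nat.mul_le_mul_right _ key
    _ = p.choose ((i-u).toNat - 1) * q.choose (j-u).toNat *
        (p.choose ((i-v).toNat + 1) * q.choose (j+1-v).toNat) := by ring

/-- The reallocation map used in the double-counting argument. -/
def hbphi (t : ℕ) (x : ℤ × ℤ) : ℤ × ℤ :=
  if x.1 + x.2 ≤ (t : ℤ) then (if 0 ≤ x.2 then (x.2, x.1) else x)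
  else (if (t : ℤ) + 1 ≤ x.2 then (x.1 + 1, x.2 - 1) else (x.2, x.1))

lemma hbphi_sum (t : ℕ) (x : ℤ × ℤ) : (hbphi t x).1 + (hbphi t x).2 = x.1 + x.2 := by
  unfold hbphi
  split_ifs <;> simp <;> ring

lemma hbphi_inj (t : ℕ) : ∀ x y : ℤ × ℤ, 0 ≤ x.1 → x.1 ≤ (t : ℤ) - 1 →
    0 ≤ y.1 → y.1 ≤ (t : ℤ) - 1 → hbphi t x = hbphi t y → x = y := by
  rintro ⟨u1, v1⟩ ⟨u2, v2⟩ h1 h2 h3 h4 h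
  simp only at h1 h2 h3 h4
  unfold hbphi at h
  simp only [Prod.ext_iff] at h ⊢
  split_ifs at h <;> simp only at h <;> omega

lemma hbphi_fst_mem (t : ℕ) (x : ℤ × ℤ) (h0 : 0 ≤ x.1) (h1 : x.1 ≤ (t : ℤ) - 1) :
    0 ≤ (hbphi t x).1 ∧ (hbphi t x).1 ≤ (t : ℤ) := by
  obtain ⟨u, v⟩ := x
  simp only at h0 h1
  unfold hbphi
  split_ifs <;> simp <;> omega

lemma hbphi_spec (p q ρ : ℕ) (i j : ℤ) (t : ℕ) (x : ℤ × ℤ) (h0 : 0 ≤ x.1)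
    (h1 : x.1 ≤ (t : ℤ) - 1) :
    bcoef p q ρ (i - x.1) (j - x.1) * bcoef p q ρ (i - x.2) (j + 1 - x.2) ≤
      bcoef p q ρ (i - (hbphi t x).1) (j + 1 - (hbphi t x).1) *
        bcoef p q ρ (i - (hbphi t x).2) (j - (hbphi t x).2) := by
  obtain ⟨u, v⟩ := x
  simp only at h0 h1
  unfold hbphi
  split_ifs with hc1 hc2 hc3 <;> simp only
  · exact le_of_eq (mul_comm _ _)
  · exact factX p q ρ i j u v (by omega)
  · exact factY p q ρ i j u v (by omega)
  · exact le_of_eq (mul_comm _ _)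

lemma range_sum_eq_Icc (n : ℕ) (f : ℤ → ℕ) :
    ∑ l ∈ Finset.range n, f (l : ℤ) = ∑ l ∈ Finset.Icc (0 : ℤ) ((n : ℤ) - 1), f l := by
  have himg : Finset.Icc (0 : ℤ) ((n : ℤ) - 1) = (Finset.range n).image Nat.cast := by
    ext z
    simp only [Finset.mem_Icc, Finset.mem_image, Finset.mem_range]
    constructor
    · intro hz
      exact ⟨z.toNat, by omega, by omega⟩
    · rintro ⟨a, ha, rfl⟩
      omega
  rw [himg, Finset.sum_image (fun a _ b _ hab => by exact_mod_cast hab)]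


set_option maxHeartbeats 800000 in
/-- The key inequality for the Hamming ball `B_ρ[p,q]`: for all integers `i`, `j` and
every positive integer `t`,
`(∑_{l=0}^{t-1} b_{i-l,j-l}) (∑_{l ∈ ℤ} b_{i-l,j+1-l})
  ≤ (∑_{l=0}^{t} b_{i-l,j+1-l}) (∑_{l ∈ ℤ} b_{i-l,j-l})`. -/
theorem hammingBall_key_inequality (p q ρ : ℕ) (i j : ℤ) (t : ℕ) (ht : 0 < t) :
    (∑ l ∈ Finset.range t, bcoef p q ρ (i - (l : ℤ)) (j - (l : ℤ))) *
        (∑ᶠ l : ℤ, bcoef p q ρ (i - l) (j + 1 - l)) ≤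
      (∑ l ∈ Finset.range (t + 1), bcoef p q ρ (i - (l : ℤ)) (j + 1 - (l : ℤ))) *
        (∑ᶠ l : ℤ, bcoef p q ρ (i - l) (j - l)) := by
  set A : ℤ → ℕ := fun l => bcoef p q ρ (i - l) (j - l) with hA
  set B : ℤ → ℕ := fun l => bcoef p q ρ (i - l) (j + 1 - l) with hB
  set S : Finset ℤ := Finset.Icc (i - (p : ℤ)) i with hS
  have hsuppA : Function.support A ⊆ (S : Set ℤ) := by
    intro l hl
    obtain ⟨h1, h2, -⟩ := bcoef_ne_zero hl
    simp only [hS, Finset.coe_Icc, Set.mem_Icc]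
    omega
  have hsuppB : Function.support B ⊆ (S : Set ℤ) := by
    intro l hl
    obtain ⟨h1, h2, -⟩ := bcoef_ne_zero hl
    simp only [hS, Finset.coe_Icc, Set.mem_Icc]
    omega
  rw [finsum_eq_finset_sum_of_support_subset A hsuppA,
      finsum_eq_finset_sum_of_support_subset B hsuppB]
  rw [range_sum_eq_Icc t A, range_sum_eq_Icc (t + 1) B]
  have hcast : ((t + 1 : ℕ) : ℤ) - 1 = (t : ℤ) := by push_cast; ring
  rw [hcast]
  set L1 : Finset ℤ := Finset.Icc (0 : ℤ) ((t : ℤ) - 1) with hL1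
  set L2 : Finset ℤ := Finset.Icc (0 : ℤ) (t : ℤ) with hL2
  have lhs_eq : (∑ l ∈ L1, A l) * (∑ m ∈ S, B m)
      = ∑ x ∈ L1 ×ˢ S, A x.1 * B x.2 :=
    (Finset.sum_mul_sum L1 S A B).trans (Finset.sum_product' L1 S fun a b => A a * B b).symm
  have rhs_eq : (∑ l ∈ L2, B l) * (∑ m ∈ S, A m)
      = ∑ x ∈ L2 ×ˢ S, B x.1 * A x.2 :=
    (Finset.sum_mul_sum L2 S B A).trans (Finset.sum_product' L2 S fun a b => B a * A b).symm
  rw [lhs_eq, rhs_eq]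
  set P : Finset (ℤ × ℤ) := (L1 ×ˢ S).filter (fun x => A x.1 * B x.2 ≠ 0) with hP
  have memP : ∀ x ∈ P, 0 ≤ x.1 ∧ x.1 ≤ (t : ℤ) - 1 ∧ A x.1 * B x.2 ≠ 0 := by
    intro x hx
    rw [hP, Finset.mem_filter] at hx
    obtain ⟨hx1, hx2⟩ := hx
    rw [Finset.mem_product, hL1, Finset.mem_Icc] at hx1
    exact ⟨hx1.1.1, hx1.1.2, hx2⟩
  calc ∑ x ∈ L1 ×ˢ S, A x.1 * B x.2
      = ∑ x ∈ P, A x.1 * B x.2 := (Finset.sum_filter_ne_zero (f := fun x : ℤ × ℤ => A x.1 * B x.2) _).symm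
    _ ≤ ∑ x ∈ P, B (hbphi t x).1 * A (hbphi t x).2 := by
        refine Finset.sum_le_sum fun x hx => ?_
        obtain ⟨h0, h1, -⟩ := memP x hx
        exact hbphi_spec p q ρ i j t x h0 h1
    _ = ∑ y ∈ P.image (hbphi t), B y.1 * A y.2 :=
        (Finset.sum_image (g := hbphi t) (f := fun y : ℤ × ℤ => B y.1 * A y.2)
          (fun x hx y hy hxy => hbphi_inj t x y (memP x hx).1 (memP x hx).2.1
            (memP y hy).1 (memP y hy).2.1 hxy)).symm
    _ ≤ ∑ y ∈ L2 ×ˢ S, B y.1 * A y.2 := by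
        refine Finset.sum_le_sum_of_subset ?_
        intro y hy
        rw [Finset.mem_image] at hy
        obtain ⟨x, hx, rfl⟩ := hy
        obtain ⟨hx0, hx1, hxne⟩ := memP x hx
        have hspec := hbphi_spec p q ρ i j t x hx0 hx1
        have hne : B (hbphi t x).1 * A (hbphi t x).2 ≠ 0 := by
          intro h
          rw [h] at hspec
          exact hxne (Nat.le_zero.mp hspec)
        have hAne : A (hbphi t x).2 ≠ 0 := fun h => hne (by rw [h, mul_zero])
        obtain ⟨g1, g2, -⟩ := bcoef_ne_zero hAne
        obtain ⟨f1, f2⟩ := hbphi_fst_mem t x hx0 hx1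
        rw [Finset.mem_product, hL2, Finset.mem_Icc, hS, Finset.mem_Icc]
        exact ⟨⟨f1, f2⟩, by omega, by omega⟩
end
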